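/- arXiv:1511.02333 — 10 statements merged into one kernel-verified Lean document; each statement's English description precedes it below -/
import Mathlib

section
/- Let P(z) = a_n z^n + a_{n-1} z^{n-1} + ... + a_1 z + a_0 be a polynomial of degree n with real coefficients satisfying a_n ≥ a_{n-1} ≥ ... ≥ a_1 ≥ a_0 > 0. Then every complex zero z of P satisfies |z| ≤ 1. -/
/-!
Multiplying `P(z) = ∑ aⱼ zʲ` by `z - 1` gives `aₙ z^(n+1) - ∑ dⱼ zʲ`, where `d₀ = a₀` and
`dⱼ = aⱼ - aⱼ₋₁`. Monotonicity makes every `dⱼ` nonnegative, and the `dⱼ` telescope to `aₙ`.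
So at a zero `z` with `‖z‖ > 1` we would get
`aₙ ‖z‖^(n+1) = ‖∑ dⱼ zʲ‖ ≤ ∑ dⱼ ‖z‖ʲ ≤ aₙ ‖z‖ⁿ < aₙ ‖z‖^(n+1)`.
-/

open Finset

section DiffCoeff

variable {R : Type*}

def diffCoeff [Sub R] (a : ℕ → R) : ℕ → R
  | 0 => a 0
  | j + 1 => a (j + 1) - a j

theorem sum_range_succ_diffCoeff [AddCommGroup R] (a : ℕ → R) (n : ℕ) :
    ∑ j ∈ range (n + 1), diffCoeff a j = a n := by
  induction n with
  | zero => simp [diffCoeff]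
  | succ n ih => rw [sum_range_succ, ih, diffCoeff, add_sub_cancel]

theorem sum_mul_pow_mul_sub_one [CommRing R] (a : ℕ → R) (z : R) (n : ℕ) :
    (∑ j ∈ range (n + 1), a j * z ^ j) * (z - 1) =
      a n * z ^ (n + 1) - ∑ j ∈ range (n + 1), diffCoeff a j * z ^ j := by
  induction n with
  | zero => rw [sum_range_one, sum_range_one, diffCoeff]; ring
  | succ n ih => rw [sum_range_succ, add_mul, ih, sum_range_succ _ (n + 1), diffCoeff]; ring

theorem diffCoeff_nonneg [AddCommGroup R] [PartialOrder R] [IsOrderedAddMonoid R]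
    {a : ℕ → R} {n : ℕ} (hmono : ∀ j, j < n → a j ≤ a (j + 1)) (h0 : 0 ≤ a 0) :
    ∀ j ≤ n, 0 ≤ diffCoeff a j
  | 0, _ => h0
  | j + 1, hj => sub_nonneg.2 (hmono j hj)

theorem ofReal_diffCoeff (a : ℕ → ℝ) (j : ℕ) :
    ((diffCoeff a j : ℝ) : ℂ) = diffCoeff (fun i ↦ (a i : ℂ)) j := by
  cases j <;> simp [diffCoeff]

end DiffCoeff

theorem norm_sum_ofReal_mul_pow_le {s : Finset ℕ} {c : ℕ → ℝ} (hc : ∀ j ∈ s, 0 ≤ c j) (z : ℂ) :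
    ‖∑ j ∈ s, (c j : ℂ) * z ^ j‖ ≤ ∑ j ∈ s, c j * ‖z‖ ^ j := by
  refine (norm_sum_le _ _).trans (sum_le_sum fun j hj ↦ ?_)
  rw [norm_mul, norm_pow, Complex.norm_real, Real.norm_of_nonneg (hc j hj)]

theorem sum_mul_pow_le_mul_pow {c : ℕ → ℝ} {n : ℕ} (hc : ∀ j ≤ n, 0 ≤ c j) {r : ℝ}
    (hr : 1 ≤ r) : ∑ j ∈ range (n + 1), c j * r ^ j ≤ (∑ j ∈ range (n + 1), c j) * r ^ n := by
  rw [sum_mul]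
  refine sum_le_sum fun j hj ↦ mul_le_mul_of_nonneg_left (pow_le_pow_right₀ hr ?_) (hc j ?_)
  all_goals exact mem_range_succ_iff.1 hj

theorem enestrom_kakeya_general (n : ℕ) (a : ℕ → ℝ)
    (hmono : ∀ j, j < n → a j ≤ a (j + 1)) (h0 : 0 < a 0)
    (z : ℂ) (hz : ∑ j ∈ Finset.range (n + 1), (a j : ℂ) * z ^ j = 0) :
    ‖z‖ ≤ 1 := by
  by_contra! hr
  have hd := diffCoeff_nonneg hmono h0.le
  have han : 0 < a n := by
    rw [← sum_range_succ_diffCoeff a n]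
    exact h0.trans_le (single_le_sum (fun j hj ↦ hd j (mem_range_succ_iff.1 hj))
      (mem_range.2 n.succ_pos))
  have hlead :
      (a n : ℂ) * z ^ (n + 1) = ∑ j ∈ range (n + 1), ((diffCoeff a j : ℝ) : ℂ) * z ^ j := by
    have h := sum_mul_pow_mul_sub_one (fun j ↦ (a j : ℂ)) z n
    simp only [hz, zero_mul, ← ofReal_diffCoeff] at h
    exact sub_eq_zero.1 h.symm
  have hbound : a n * ‖z‖ ^ (n + 1) ≤ a n * ‖z‖ ^ n :=
    calc a n * ‖z‖ ^ (n + 1) = ‖∑ j ∈ range (n + 1), ((diffCoeff a j : ℝ) : ℂ) * z ^ j‖ := by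
          rw [← hlead, norm_mul, norm_pow, Complex.norm_real, Real.norm_of_nonneg han.le]
      _ ≤ ∑ j ∈ range (n + 1), diffCoeff a j * ‖z‖ ^ j :=
          norm_sum_ofReal_mul_pow_le (fun j hj ↦ hd j (mem_range_succ_iff.1 hj)) z
      _ ≤ a n * ‖z‖ ^ n := by
          simpa only [sum_range_succ_diffCoeff] using sum_mul_pow_le_mul_pow hd hr.le
  exact hbound.not_gt (mul_lt_mul_of_pos_left (pow_lt_pow_right₀ hr n.lt_succ_self) han)

/-- Classical Eneström–Kakeya theorem. -/
theorem enestrom_kakeya (n : ℕ) (a : ℕ → ℝ) (hn : 0 < n)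
    (hmono : ∀ j, j < n → a j ≤ a (j + 1)) (h0 : 0 < a 0)
    (z : ℂ) (hz : ∑ j ∈ Finset.range (n + 1), (a j : ℂ) * z ^ j = 0) :
    ‖z‖ ≤ 1 :=
  enestrom_kakeya_general n a hmono h0 z hz
end

section
/- Let P(z) = Σ_{j=0}^n a_j z^j be a polynomial of degree n with complex coefficients such that |arg a_j − β| ≤ α ≤ π/2 for j = 0, 1, ..., n, for some real β, and |a_n| ≥ |a_{n-1}| ≥ ... ≥ |a_1| ≥ |a_0|. Then every zero z of P satisfies |z| ≤ (cos α + sin α) + (2 sin α / |a_n|) · Σ_{ν=0}^{n} |a_ν|. -/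
/-!
Multiplying by `z - 1` turns `P(z) = 0` into `a_n z^{n+1} = a_0 + ∑ (a_{j+1} - a_j) z^{j+1}`,
so a zero with `|z| > 1` satisfies `|a_n| |z| ≤ |a_0| + ∑ |a_{j+1} - a_j|`. Two coefficients in
the sector have arguments at most `2α ≤ π` apart, and the law of cosines then gives
`|a_{j+1} - a_j| ≤ (|a_{j+1}| - |a_j|) cos α + (|a_{j+1}| + |a_j|) sin α`, which telescopes
when summed.
-/

namespace Complex

lemma law_cos_arg_sub (a b : ℂ) :
    ‖a - b‖ ^ 2 = ‖a‖ ^ 2 + ‖b‖ ^ 2 - 2 * ‖a‖ * ‖b‖ * Real.cos (arg a - arg b) := by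
  rw [Real.cos_sub, Complex.sq_norm, Complex.sq_norm, Complex.sq_norm, normSq_sub, mul_re, conj_re,
    conj_im, ← norm_mul_cos_arg a, ← norm_mul_cos_arg b, ← norm_mul_sin_arg a, ← norm_mul_sin_arg b]
  ring

lemma norm_sub_le_of_abs_arg_sub_le {a b : ℂ} {α : ℝ} (hα : α ≤ Real.pi / 2)
    (hab : |arg a - arg b| ≤ 2 * α) (hba : ‖b‖ ≤ ‖a‖) :
    ‖a - b‖ ≤ (‖a‖ - ‖b‖) * Real.cos α + (‖a‖ + ‖b‖) * Real.sin α := by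
  have hα₀ : 0 ≤ α := by linarith [abs_nonneg (arg a - arg b)]
  have hcos : 0 ≤ Real.cos α := Real.cos_nonneg_of_mem_Icc ⟨by linarith [Real.pi_pos], hα⟩
  have hsin : 0 ≤ Real.sin α := Real.sin_nonneg_of_nonneg_of_le_pi hα₀ (by linarith)
  have hsin₂ : 0 ≤ Real.sin (2 * α) :=
    Real.sin_nonneg_of_nonneg_of_le_pi (by linarith) (by linarith)
  have hcos_le : Real.cos (2 * α) ≤ Real.cos (arg a - arg b) := by
    rw [← Real.cos_abs (arg a - arg b)]
    exact Real.cos_le_cos_of_nonneg_of_le_pi (abs_nonneg _) (by linarith) hab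
  have hb := norm_nonneg b
  refine le_of_pow_le_pow_left₀ two_ne_zero (by nlinarith) ?_
  calc ‖a - b‖ ^ 2 = ‖a‖ ^ 2 + ‖b‖ ^ 2 - 2 * ‖a‖ * ‖b‖ * Real.cos (arg a - arg b) :=
        law_cos_arg_sub a b
    _ ≤ ‖a‖ ^ 2 + ‖b‖ ^ 2 - 2 * ‖a‖ * ‖b‖ * Real.cos (2 * α)
          + (‖a‖ ^ 2 - ‖b‖ ^ 2) * Real.sin (2 * α) := by
        have : 0 ≤ ‖a‖ ^ 2 - ‖b‖ ^ 2 := by nlinarith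
        nlinarith [mul_nonneg (mul_nonneg (norm_nonneg a) hb) (sub_nonneg.2 hcos_le),
          mul_nonneg this hsin₂]
    _ = ((‖a‖ - ‖b‖) * Real.cos α + (‖a‖ + ‖b‖) * Real.sin α) ^ 2 := by
        rw [Real.cos_two_mul, Real.sin_two_mul]
        linear_combination -(‖a‖ + ‖b‖) ^ 2 * Real.sin_sq_add_cos_sq α

lemma abs_arg_sub_le_of_abs_arg_sub_le {a b : ℂ} {α β : ℝ} (ha : |arg a - β| ≤ α)
    (hb : |arg b - β| ≤ α) : |arg a - arg b| ≤ 2 * α := by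
  calc |arg a - arg b| ≤ |arg a - β| + |β - arg b| := abs_sub_le _ _ _
    _ ≤ 2 * α := by rw [abs_sub_comm β]; linarith

end Complex

open Finset

lemma Real.one_le_cos_add_sin {x : ℝ} (h₀ : 0 ≤ x) (h₁ : x ≤ Real.pi / 2) :
    1 ≤ Real.cos x + Real.sin x := by
  have hsin : 0 ≤ Real.sin x := Real.sin_nonneg_of_nonneg_of_le_pi h₀ (by linarith [Real.pi_pos])
  have hcos : 0 ≤ Real.cos x := Real.cos_nonneg_of_mem_Icc ⟨by linarith [Real.pi_pos], h₁⟩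
  nlinarith [Real.sin_sq_add_cos_sq x, Real.sin_le_one x, Real.cos_le_one x]

lemma sub_one_mul_sum_range_mul_pow {R : Type*} [CommRing R] (a : ℕ → R) (z : R) (n : ℕ) :
    (z - 1) * ∑ j ∈ range (n + 1), a j * z ^ j
      = a n * z ^ (n + 1) - a 0 - ∑ j ∈ range n, (a (j + 1) - a j) * z ^ (j + 1) := by
  induction n with
  | zero => simp; ring
  | succ k ih =>
    rw [sum_range_succ, sum_range_succ (fun j ↦ (a (j + 1) - a j) * z ^ (j + 1))]
    linear_combination ih

lemma norm_mul_norm_le_of_sum_range_mul_pow_eq_zero {𝕜 : Type*} [NormedField 𝕜] {a : ℕ → 𝕜}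
    {n : ℕ} {z : 𝕜} (hz : ∑ j ∈ range (n + 1), a j * z ^ j = 0) (hz₁ : 1 ≤ ‖z‖) :
    ‖a n‖ * ‖z‖ ≤ ‖a 0‖ + ∑ j ∈ range n, ‖a (j + 1) - a j‖ := by
  have hlead : a n * z ^ (n + 1) = a 0 + ∑ j ∈ range n, (a (j + 1) - a j) * z ^ (j + 1) := by
    linear_combination -sub_one_mul_sum_range_mul_pow a z n + (z - 1) * hz
  refine le_of_mul_le_mul_right ?_ (pow_pos (zero_lt_one.trans_le hz₁) n)
  calc ‖a n‖ * ‖z‖ * ‖z‖ ^ n = ‖a n * z ^ (n + 1)‖ := by rw [norm_mul, norm_pow, pow_succ']; ring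
    _ ≤ ‖a 0‖ + ∑ j ∈ range n, ‖a (j + 1) - a j‖ * ‖z‖ ^ (j + 1) := by
      rw [hlead]
      refine (norm_add_le _ _).trans (add_le_add le_rfl ((norm_sum_le _ _).trans_eq ?_))
      simp only [norm_mul, norm_pow]
    _ ≤ ‖a 0‖ * ‖z‖ ^ n + ∑ j ∈ range n, ‖a (j + 1) - a j‖ * ‖z‖ ^ n := by
      gcongr with j hj
      · exact le_mul_of_one_le_right (norm_nonneg _) (one_le_pow₀ hz₁)
      · exact mem_range.1 hj
    _ = (‖a 0‖ + ∑ j ∈ range n, ‖a (j + 1) - a j‖) * ‖z‖ ^ n := by rw [add_mul, sum_mul]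

lemma sum_range_norm_sub_le_of_abs_arg_sub_le {a : ℕ → ℂ} {n : ℕ} {α β : ℝ}
    (hα : α ≤ Real.pi / 2) (harg : ∀ j ≤ n, |Complex.arg (a j) - β| ≤ α)
    (hmono : ∀ j < n, ‖a j‖ ≤ ‖a (j + 1)‖) :
    ∑ j ∈ range n, ‖a (j + 1) - a j‖ ≤ (‖a n‖ - ‖a 0‖) * Real.cos α
      + (2 * ∑ j ∈ range (n + 1), ‖a j‖ - ‖a n‖ - ‖a 0‖) * Real.sin α := by
  calc ∑ j ∈ range n, ‖a (j + 1) - a j‖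
      ≤ ∑ j ∈ range n, ((‖a (j + 1)‖ - ‖a j‖) * Real.cos α
          + (‖a (j + 1)‖ + ‖a j‖) * Real.sin α) := by
        refine sum_le_sum fun j hj ↦ ?_
        have hj : j < n := mem_range.1 hj
        exact Complex.norm_sub_le_of_abs_arg_sub_le hα
          (Complex.abs_arg_sub_le_of_abs_arg_sub_le (harg (j + 1) hj) (harg j hj.le)) (hmono j hj)
    _ = _ := by
        have h₁ := sum_range_succ (fun j ↦ ‖a j‖) n
        have h₂ := sum_range_succ' (fun j ↦ ‖a j‖) n
        rw [sum_add_distrib, ← sum_mul, ← sum_mul, sum_range_sub (fun j ↦ ‖a j‖), sum_add_distrib]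
        linear_combination -Real.sin α * (h₁ + h₂)

theorem govil_rahman_general (n : ℕ) (a : ℕ → ℂ) (han : a n ≠ 0)
    (α β : ℝ) (hα : α ≤ Real.pi / 2)
    (harg : ∀ j ≤ n, |Complex.arg (a j) - β| ≤ α)
    (hmono : ∀ j, j < n → ‖a j‖ ≤ ‖a (j + 1)‖)
    (z : ℂ) (hz : ∑ j ∈ Finset.range (n + 1), a j * z ^ j = 0) :
    ‖z‖ ≤ (Real.cos α + Real.sin α) +
      (2 * Real.sin α / ‖a n‖) *
        ∑ ν ∈ Finset.range (n + 1), ‖a ν‖ := by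
  have hα₀ : 0 ≤ α := (abs_nonneg _).trans (harg n le_rfl)
  have hA : 0 < ‖a n‖ := norm_pos_iff.2 han
  have hsin : 0 ≤ Real.sin α := Real.sin_nonneg_of_nonneg_of_le_pi hα₀ (by linarith [Real.pi_pos])
  have hcs := Real.one_le_cos_add_sin hα₀ hα
  have hS : 0 ≤ ∑ ν ∈ range (n + 1), ‖a ν‖ := sum_nonneg fun ν _ ↦ norm_nonneg (a ν)
  have htail : 0 ≤ 2 * Real.sin α / ‖a n‖ * ∑ ν ∈ range (n + 1), ‖a ν‖ := by positivity
  rcases le_or_gt ‖z‖ 1 with hz₁ | hz₁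
  · linarith
  have hroot := norm_mul_norm_le_of_sum_range_mul_pow_eq_zero hz hz₁.le
  have hdiff := sum_range_norm_sub_le_of_abs_arg_sub_le hα harg hmono
  rw [div_mul_eq_mul_div, ← sub_le_iff_le_add', le_div_iff₀ hA]
  -- the `a_0` term enters with coefficient `1 - cos α - sin α ≤ 0`
  linarith [mul_nonneg (norm_nonneg (a 0)) (sub_nonneg.2 hcs), mul_nonneg hA.le hsin]

/-- Govil–Rahman extension of the Eneström–Kakeya theorem. -/
theorem govil_rahman (n : ℕ) (a : ℕ → ℂ) (hn : 0 < n) (han : a n ≠ 0)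
    (α β : ℝ) (hα : α ≤ Real.pi / 2)
    (harg : ∀ j ≤ n, |Complex.arg (a j) - β| ≤ α)
    (hmono : ∀ j, j < n → ‖a j‖ ≤ ‖a (j + 1)‖)
    (z : ℂ) (hz : ∑ j ∈ Finset.range (n + 1), a j * z ^ j = 0) :
    ‖z‖ ≤ (Real.cos α + Real.sin α) +
      (2 * Real.sin α / ‖a n‖) *
        ∑ ν ∈ Finset.range (n + 1), ‖a ν‖ :=
  govil_rahman_general n a han α β hα harg hmono z hz
end

section
/- If a and b are complex numbers with |arg a − β| ≤ α ≤ π/2 and |arg b − β| ≤ α ≤ π/2 for some real β, and c is a complex number also satisfying |arg c − β| ≤ α, then for reals t_1 > t_2 ≥ 0: |t_1 t_2 a + (t_1 − t_2) b − c| ≤ | t_1 t_2 |a| + (t_1 − t_2)|b| − |c| | · cos α + ( t_1 t_2 |a| + (t_1 − t_2)|b| + |c| ) · sin α. -/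
/-!
Any two points `z`, `w` of the sector of half-opening `α ≤ π/2` make an angle at most `2α`, so the
law of cosines gives
`‖z - w‖² ≤ ‖z‖² + ‖w‖² - 2‖z‖‖w‖ cos 2α ≤ (|‖z‖ - ‖w‖| cos α + (‖z‖ + ‖w‖) sin α)²`.
For `u + v - c`, split `c = λc + μc` in proportion to `‖u‖ : ‖v‖`: then `‖u‖ - λ‖c‖` and
`‖v‖ - μ‖c‖` are the nonnegative multiples `λ(S - ‖c‖)` and `μ(S - ‖c‖)` of one number, with
`S = ‖u‖ + ‖v‖`, so the two estimates for `u - λc` and `v - μc` add up to the claimed one.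
-/

open Real InnerProductGeometry InnerProductSpace

theorem norm_sub_le_of_norm_mul_norm_mul_cos_two_mul_le_inner {V : Type*}
    [NormedAddCommGroup V] [InnerProductSpace ℝ V] {x y : V} {α : ℝ} (hα0 : 0 ≤ α)
    (hα : α ≤ π / 2) (hxy : ‖x‖ * ‖y‖ * cos (2 * α) ≤ ⟪x, y⟫_ℝ) :
    ‖x - y‖ ≤ |‖x‖ - ‖y‖| * cos α + (‖x‖ + ‖y‖) * sin α := by
  have hsin : 0 ≤ sin α := sin_nonneg_of_nonneg_of_le_pi hα0 (by linarith [pi_pos])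
  have hcos : 0 ≤ cos α := cos_nonneg_of_mem_Icc ⟨by linarith [pi_pos], hα⟩
  have hcross : 0 ≤ |‖x‖ - ‖y‖| * (‖x‖ + ‖y‖) * cos α * sin α := by positivity
  rw [← sq_le_sq₀ (norm_nonneg _) (by positivity), norm_sub_sq_real]
  nlinarith [sq_abs (‖x‖ - ‖y‖), sin_sq_add_cos_sq α, cos_two_mul' α]

/-- `0` belongs to every sector (whatever the junk value `Complex.arg 0`), so that sectors are
closed under multiplication by reals `r ≥ 0`. -/
def sector (α β : ℝ) : Set ℂ := {z | z ≠ 0 → |z.arg - β| ≤ α}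

theorem ofReal_mul_mem_sector {α β r : ℝ} {z : ℂ} (hr : 0 ≤ r) (hz : z ∈ sector α β) :
    (r : ℂ) * z ∈ sector α β := by
  intro hrz
  have hr' : 0 < r := hr.lt_of_ne (by rintro rfl; simp at hrz)
  rw [Complex.arg_real_mul z hr']
  exact hz (right_ne_zero_of_mul hrz)

theorem Complex.cos_angle_eq_cos_arg_sub {z w : ℂ} (hz : z ≠ 0) (hw : w ≠ 0) :
    Real.cos (angle z w) = Real.cos (z.arg - w.arg) := by
  rw [angle_eq_abs_arg hz hw, cos_abs, ← Real.Angle.cos_coe, arg_div_coe_angle hz hw,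
    ← Real.Angle.coe_sub, Real.Angle.cos_coe]

theorem norm_mul_norm_mul_cos_two_mul_le_inner_of_mem_sector {α β : ℝ} {z w : ℂ}
    (hα : α ≤ π / 2) (hz : z ∈ sector α β) (hw : w ∈ sector α β) :
    ‖z‖ * ‖w‖ * cos (2 * α) ≤ ⟪z, w⟫_ℝ := by
  rcases eq_or_ne z 0 with rfl | hz0
  · simp
  rcases eq_or_ne w 0 with rfl | hw0
  · simp
  have harg : |z.arg - w.arg| ≤ 2 * α := by
    calc |z.arg - w.arg| ≤ |z.arg - β| + |β - w.arg| := abs_sub_le _ _ _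
      _ ≤ 2 * α := by linarith [hz hz0, hw hw0, abs_sub_comm β w.arg]
  have hcos : cos (2 * α) ≤ cos (angle z w) := by
    rw [Complex.cos_angle_eq_cos_arg_sub hz0 hw0, ← cos_abs (z.arg - w.arg)]
    exact cos_le_cos_of_nonneg_of_le_pi (abs_nonneg _) (by linarith) harg
  rw [← cos_angle_mul_norm_mul_norm, mul_comm (cos _)]
  gcongr

theorem norm_sub_le_of_mem_sector {α β : ℝ} {z w : ℂ} (hα0 : 0 ≤ α) (hα : α ≤ π / 2)
    (hz : z ∈ sector α β) (hw : w ∈ sector α β) :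
    ‖z - w‖ ≤ |‖z‖ - ‖w‖| * cos α + (‖z‖ + ‖w‖) * sin α :=
  norm_sub_le_of_norm_mul_norm_mul_cos_two_mul_le_inner hα0 hα
    (norm_mul_norm_mul_cos_two_mul_le_inner_of_mem_sector hα hz hw)

theorem exists_proportional_weights {p q : ℝ} (hp : 0 ≤ p) (hq : 0 ≤ q) :
    ∃ l m : ℝ, 0 ≤ l ∧ 0 ≤ m ∧ l + m = 1 ∧ p = l * (p + q) ∧ q = m * (p + q) := by
  rcases (add_nonneg hp hq).eq_or_lt with hpq | hpq
  · exact ⟨1, 0, zero_le_one, le_rfl, add_zero 1, by linarith, by linarith⟩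
  · refine ⟨p / (p + q), q / (p + q), by positivity, by positivity, ?_, ?_, ?_⟩ <;> field_simp

theorem norm_add_sub_le_of_mem_sector {α β : ℝ} {u v c : ℂ} (hα0 : 0 ≤ α) (hα : α ≤ π / 2)
    (hu : u ∈ sector α β) (hv : v ∈ sector α β) (hc : c ∈ sector α β) :
    ‖u + v - c‖ ≤ |‖u‖ + ‖v‖ - ‖c‖| * cos α + (‖u‖ + ‖v‖ + ‖c‖) * sin α := by
  obtain ⟨l, m, hl, hm, hlm, hul, hvm⟩ :=
    exists_proportional_weights (norm_nonneg u) (norm_nonneg v)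
  set S := ‖u‖ + ‖v‖
  have hsplit : u + v - c = (u - l * c) + (v - m * c) := by
    linear_combination (c : ℂ) * (by exact_mod_cast hlm : (l : ℂ) + m = 1)
  have hbound {k : ℝ} {z : ℂ} (hk : 0 ≤ k) (hz : z ∈ sector α β) :
      ‖z - k * c‖ ≤ |‖z‖ - k * ‖c‖| * cos α + (‖z‖ + k * ‖c‖) * sin α := by
    simpa only [norm_mul, Complex.norm_of_nonneg hk] using
      norm_sub_le_of_mem_sector hα0 hα hz (ofReal_mul_mem_sector hk hc)
  calc ‖u + v - c‖ ≤ ‖u - l * c‖ + ‖v - m * c‖ := hsplit ▸ norm_add_le _ _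
    _ ≤ (|‖u‖ - l * ‖c‖| * cos α + (‖u‖ + l * ‖c‖) * sin α) +
        (|‖v‖ - m * ‖c‖| * cos α + (‖v‖ + m * ‖c‖) * sin α) :=
      add_le_add (hbound hl hu) (hbound hm hv)
    _ = |S - ‖c‖| * cos α + (S + ‖c‖) * sin α := by
      rw [hul, hvm, ← mul_sub, ← mul_sub, abs_mul, abs_mul, abs_of_nonneg hl, abs_of_nonneg hm]
      linear_combination (|S - ‖c‖| * cos α + (S + ‖c‖) * sin α) * hlm

/-- Lemma 2.1. -/
theorem lemma21 (a b c : ℂ) (α β : ℝ) (hα : α ≤ Real.pi / 2)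
    (ha : |Complex.arg a - β| ≤ α) (hb : |Complex.arg b - β| ≤ α)
    (hc : |Complex.arg c - β| ≤ α)
    (t1 t2 : ℝ) (ht : t1 > t2) (ht2 : 0 ≤ t2) :
    ‖((t1 * t2 : ℝ) : ℂ) * a + ((t1 - t2 : ℝ) : ℂ) * b - c‖ ≤
      |t1 * t2 * ‖a‖ + (t1 - t2) * ‖b‖ - ‖c‖| * Real.cos α +
      (t1 * t2 * ‖a‖ + (t1 - t2) * ‖b‖ + ‖c‖) * Real.sin α := by
  have hprod : 0 ≤ t1 * t2 := mul_nonneg (by linarith) ht2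
  have hdiff : 0 ≤ t1 - t2 := by linarith
  have hmem {z : ℂ} (hz : |z.arg - β| ≤ α) : z ∈ sector α β := fun _ ↦ hz
  simpa only [norm_mul, Complex.norm_of_nonneg hprod, Complex.norm_of_nonneg hdiff] using
    norm_add_sub_le_of_mem_sector ((abs_nonneg _).trans ha) hα
      (ofReal_mul_mem_sector hprod (hmem ha)) (ofReal_mul_mem_sector hdiff (hmem hb)) (hmem hc)
end

section
/- Let P(z) = Σ_{j=0}^n a_j z^j be a polynomial of degree n ≥ 3 with complex coefficients such that |arg a_j − β| ≤ α ≤ π/2 for j = 0, ..., n, for some real β. Suppose t_1 ≠ 0 and t_2 with t_1 ≥ t_2 ≥ 0 satisfy t_1 t_2 |a_r| + (t_1 − t_2)|a_{r-1}| − |a_{r-2}| ≥ 0 for r = 1, ..., k+1, and t_1 t_2 |a_r| + (t_1 − t_2)|a_{r-1}| − |a_{r-2}| ≤ 0 for r = k+2, ..., n+1, where 0 ≤ k ≤ n−3 and a_{-2} = a_{-1} = a_{n+1} = 0. Then every zero z of P satisfies |z + a_{n-1}/a_n − (t_1 − t_2)| ≤ (2 t_2 |a_{k+1}| + 2|a_k|)/(|a_n|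 t_1^{n-k-1}) · cos α + (2 sin α / |a_n|) Σ_{ν=0}^{n-2} |a_ν| / t_1^{n-ν-1} + ( t_2 + |a_{n-1}/a_n| )(sin α − cos α). -/
/-!
Multiplying `P` by `(z - t₁)(z + t₂)` gives coefficients
`c_r = a_{r-2} - (t₁ - t₂) a_{r-1} - t₁ t₂ a_r`, and at a zero `z` of `P`
`a_n z^{n+1} (z + a_{n-1}/a_n - (t₁ - t₂)) = -∑_{r ≤ n} c_r z^r`.
Since the `a_j` lie in a sector of half-angle `α`, comparing `a_{r-2}` with the sector vector
`(t₁ - t₂) a_{r-1} + t₁ t₂ a_r` bounds `|c_r|` by `|M_r| cos α + (2 |a_{r-2}| + M_r) sin α`, where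
`M_r = t₁ t₂ |a_r| + (t₁ - t₂) |a_{r-1}| - |a_{r-2}|`. The weighted terms `M_r t₁^r` telescope
and change sign once, at `r = k + 2`, so `∑_r |c_r| t₁^r` is bounded in closed form. For
`|z| ≥ t₁` this bounds `|a_n| t₁^{n+1} |z + a_{n-1}/a_n - (t₁ - t₂)|` directly; for `|z| < t₁`
the triangle inequality together with the bound on `|c_{n+1}|` gives the same estimate.
-/

open Finset Real

lemma abs_im_le_of_mul_cos_le_re {w : ℂ} {S α : ℝ} (hS : 0 ≤ S) (hsin : 0 ≤ sin α)
    (hcos : 0 ≤ cos α) (hw : ‖w‖ ≤ S) (hre : S * cos α ≤ w.re) : |w.im| ≤ S * sin α := by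
  have hnorm : w.re ^ 2 + w.im ^ 2 = ‖w‖ ^ 2 := by
    rw [Complex.sq_norm, Complex.normSq_apply]; ring
  have hre_sq : (S * cos α) ^ 2 ≤ w.re ^ 2 := pow_le_pow_left₀ (mul_nonneg hS hcos) hre 2
  have hnorm_sq : ‖w‖ ^ 2 ≤ S ^ 2 := pow_le_pow_left₀ (norm_nonneg w) hw 2
  refine abs_le_of_sq_le_sq ?_ (mul_nonneg hS hsin)
  nlinarith [sin_sq_add_cos_sq α]

lemma norm_sub_le_of_mul_cos_le_re {u v : ℂ} {S α : ℝ} (hS : 0 ≤ S) (hsin : 0 ≤ sin α)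
    (hcos : 0 ≤ cos α) (hu : ‖u‖ * cos α ≤ u.re) (hv : ‖v‖ ≤ S) (hvre : S * cos α ≤ v.re) :
    ‖u - v‖ ≤ |‖u‖ - S| * cos α + (‖u‖ + S) * sin α := by
  have hu0 := norm_nonneg u
  have hu_im := abs_im_le_of_mul_cos_le_re hu0 hsin hcos le_rfl hu
  have hv_im := abs_im_le_of_mul_cos_le_re hS hsin hcos hv hvre
  have hre : ‖u‖ * cos α * (S * cos α) ≤ u.re * v.re :=
    mul_le_mul hu hvre (mul_nonneg hS hcos) ((mul_nonneg hu0 hcos).trans hu)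
  have him : |u.im * v.im| ≤ ‖u‖ * sin α * (S * sin α) := by
    rw [abs_mul]; exact mul_le_mul hu_im hv_im (abs_nonneg _) (mul_nonneg hu0 hsin)
  have hnorm_sub : ‖u - v‖ ^ 2 = ‖u‖ ^ 2 + ‖v‖ ^ 2 - 2 * (u.re * v.re + u.im * v.im) := by
    simp only [Complex.sq_norm, Complex.normSq_apply, Complex.sub_re, Complex.sub_im]; ring
  have hvS : ‖v‖ ^ 2 ≤ S ^ 2 := pow_le_pow_left₀ (norm_nonneg v) hv 2
  have hcross : 0 ≤ |‖u‖ - S| * cos α * ((‖u‖ + S) * sin α) := by positivity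
  -- squared, the claim reduces to `Re u Re v + Im u Im v ≥ ‖u‖ S (cos² α - sin² α)`
  have hsq : ‖u - v‖ ^ 2 ≤ (|‖u‖ - S| * cos α + (‖u‖ + S) * sin α) ^ 2 := by
    nlinarith [sin_sq_add_cos_sq α, sq_abs (‖u‖ - S), neg_abs_le (u.im * v.im)]
  exact (pow_le_pow_iff_left₀ (norm_nonneg _) (by positivity) two_ne_zero).1 hsq

lemma norm_mul_cos_le_re_exp_mul {w : ℂ} {α β : ℝ} (hα : α ≤ π / 2)
    (harg : |Complex.arg w - β| ≤ α) :
    ‖w‖ * cos α ≤ (Complex.exp (-β * Complex.I) * w).re := by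
  have hrot : Complex.exp (-β * Complex.I) * w
      = ‖w‖ * Complex.exp ((Complex.arg w - β : ℝ) * Complex.I) := by
    conv_lhs => rw [← Complex.norm_mul_exp_arg_mul_I w]
    rw [mul_left_comm, ← Complex.exp_add]
    push_cast; ring_nf
  rw [hrot, Complex.re_ofReal_mul, Complex.exp_ofReal_mul_I_re, ← cos_abs (_ - β)]
  gcongr
  exact cos_le_cos_of_nonneg_of_le_pi (abs_nonneg _) (by linarith [pi_pos]) harg

lemma one_le_cos_add_sin {α : ℝ} (hsin : 0 ≤ sin α) (hcos : 0 ≤ cos α) : 1 ≤ cos α + sin α := by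
  nlinarith [sin_sq_add_cos_sq α, mul_nonneg hsin hcos]

lemma sum_range_succ_mul_pow_sub_one {R : Type*} [CommSemiring R] {f : ℤ → R} (hf : f (-1) = 0)
    (x : R) (N : ℕ) : ∑ r ∈ range (N + 1), f (r - 1) * x ^ r = x * ∑ j ∈ range N, f j * x ^ j := by
  rw [sum_range_succ', mul_sum]
  simp only [Nat.cast_add, Nat.cast_one, add_sub_cancel_right, Nat.cast_zero, zero_sub, hf,
    zero_mul, add_zero, pow_succ]
  exact sum_congr rfl fun j _ => by ring

lemma sum_range_add_two_mul_pow_sub_two {R : Type*} [CommSemiring R] {f : ℤ → R}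
    (hf₁ : f (-1) = 0) (hf₂ : f (-2) = 0) (x : R) (N : ℕ) :
    ∑ r ∈ range (N + 2), f (r - 2) * x ^ r = x ^ 2 * ∑ j ∈ range N, f j * x ^ j := by
  have h := sum_range_succ_mul_pow_sub_one (f := fun j => f (j - 1)) (by norm_num [hf₂]) x (N + 1)
  simp only [sub_sub, one_add_one_eq_two, sum_range_succ_mul_pow_sub_one hf₁] at h
  rw [h, ← mul_assoc, sq]

lemma sum_range_abs_eq_of_nonneg_of_nonpos {g : ℕ → ℝ} {K N : ℕ} (hKN : K ≤ N)
    (hpos : ∀ r < K, 0 ≤ g r) (hneg : ∀ r ∈ Ico K N, g r ≤ 0) :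
    ∑ r ∈ range N, |g r| = 2 * ∑ r ∈ range K, g r - ∑ r ∈ range N, g r := by
  rw [← sum_range_add_sum_Ico _ hKN, ← sum_range_add_sum_Ico _ hKN]
  have h₁ : ∑ r ∈ range K, |g r| = ∑ r ∈ range K, g r :=
    sum_congr rfl fun r hr => abs_of_nonneg (hpos r (mem_range.1 hr))
  have h₂ : ∑ r ∈ Ico K N, |g r| = -∑ r ∈ Ico K N, g r := by
    rw [← sum_neg_distrib]; exact sum_congr rfl fun r hr => abs_of_nonpos (hneg r hr)
  rw [h₁, h₂]; ring

lemma sum_range_le_of_nonpos {g : ℕ → ℝ} {K N : ℕ} (hKN : K ≤ N)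
    (hneg : ∀ r ∈ Ico K N, g r ≤ 0) : ∑ r ∈ range N, g r ≤ ∑ r ∈ range K, g r := by
  rw [← sum_range_add_sum_Ico _ hKN]
  linarith [sum_nonpos hneg]

lemma norm_mul_pow_le_of_eq_sum {w z : ℂ} {d : ℕ → ℂ} {t : ℝ} {N : ℕ} (ht : 0 < t)
    (hz : t ≤ ‖z‖) (h : w * z ^ N = ∑ r ∈ range N, d r * z ^ r) :
    ‖w‖ * t ^ N ≤ ∑ r ∈ range N, ‖d r‖ * t ^ r := by
  refine le_of_mul_le_mul_right ?_ (pow_pos (ht.trans_le hz) N)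
  calc ‖w‖ * t ^ N * ‖z‖ ^ N = ‖∑ r ∈ range N, d r * z ^ r‖ * t ^ N := by
        rw [← h, norm_mul, norm_pow]; ring
    _ ≤ (∑ r ∈ range N, ‖d r‖ * ‖z‖ ^ r) * t ^ N := by
        gcongr
        exact (norm_sum_le _ _).trans_eq (by simp only [norm_mul, norm_pow])
    _ ≤ (∑ r ∈ range N, ‖d r‖ * t ^ r) * ‖z‖ ^ N := by
        rw [sum_mul, sum_mul]
        refine sum_le_sum fun r hr => ?_
        obtain ⟨e, rfl⟩ := Nat.exists_eq_add_of_le (mem_range.1 hr).le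
        calc ‖d r‖ * ‖z‖ ^ r * t ^ (r + e) = ‖d r‖ * ‖z‖ ^ r * t ^ r * t ^ e := by ring
          _ ≤ ‖d r‖ * ‖z‖ ^ r * t ^ r * ‖z‖ ^ e := by gcongr
          _ = ‖d r‖ * t ^ r * ‖z‖ ^ (r + e) := by ring

/-- The coefficient of `z ^ r` in `(z - t₁) (z + t₂) ∑ a j z ^ j`. -/
noncomputable def mulCoeff (a : ℤ → ℂ) (t₁ t₂ : ℝ) (r : ℤ) : ℂ :=
  a (r - 2) - ((t₁ - t₂ : ℝ) * a (r - 1) + (t₁ * t₂ : ℝ) * a r)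

def normCombo (b : ℤ → ℝ) (t₁ t₂ : ℝ) (r : ℤ) : ℝ :=
  t₁ * t₂ * b r + (t₁ - t₂) * b (r - 1) - b (r - 2)

noncomputable def coeffBound (b : ℤ → ℝ) (t₁ t₂ α : ℝ) (r : ℤ) : ℝ :=
  |normCombo b t₁ t₂ r| * cos α + (b (r - 2) + (t₁ - t₂) * b (r - 1) + t₁ * t₂ * b r) * sin α

lemma norm_mulCoeff_le {a : ℤ → ℂ} {c : ℂ} {α t₁ t₂ : ℝ} {r : ℤ} (hc : ‖c‖ = 1)
    (hsin : 0 ≤ sin α) (hcos : 0 ≤ cos α) (ht₂ : 0 ≤ t₂) (ht₁₂ : t₂ ≤ t₁)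
    (hsec : ∀ j, r - 2 ≤ j → j ≤ r → ‖a j‖ * cos α ≤ (c * a j).re) :
    ‖mulCoeff a t₁ t₂ r‖ ≤ coeffBound (‖a ·‖) t₁ t₂ α r := by
  have hs : 0 ≤ t₁ - t₂ := sub_nonneg.2 ht₁₂
  have hp : 0 ≤ t₁ * t₂ := mul_nonneg (ht₂.trans ht₁₂) ht₂
  set v : ℂ := (t₁ - t₂ : ℝ) * a (r - 1) + (t₁ * t₂ : ℝ) * a r
  set S := (t₁ - t₂) * ‖a (r - 1)‖ + t₁ * t₂ * ‖a r‖
  have hv : ‖c * v‖ ≤ S := by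
    rw [norm_mul, hc, one_mul]
    refine (norm_add_le _ _).trans_eq ?_
    rw [norm_mul, norm_mul, Complex.norm_real, Complex.norm_real, Real.norm_of_nonneg hs,
      Real.norm_of_nonneg hp]
  have hvre : S * cos α ≤ (c * v).re := by
    have hre : (c * v).re = (t₁ - t₂) * (c * a (r - 1)).re + t₁ * t₂ * (c * a r).re := by
      simp only [v, mul_add, mul_left_comm c, Complex.add_re, Complex.re_ofReal_mul]
    rw [hre]
    nlinarith [mul_le_mul_of_nonneg_left (hsec (r - 1) (by omega) (by omega)) hs,
      mul_le_mul_of_nonneg_left (hsec r (by omega) le_rfl) hp]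
  have hu : ‖c * a (r - 2)‖ * cos α ≤ (c * a (r - 2)).re := by
    rw [norm_mul, hc, one_mul]; exact hsec _ le_rfl (by omega)
  have key := norm_sub_le_of_mul_cos_le_re (by positivity) hsin hcos hu hv hvre
  rw [← mul_sub, norm_mul, hc, one_mul, norm_mul, hc, one_mul] at key
  refine key.trans_eq ?_
  rw [coeffBound, normCombo, abs_sub_comm]
  simp only [S]
  ring_nf

lemma sum_mulCoeff_mul_pow {a : ℤ → ℂ} {n : ℕ} (hm2 : a (-2) = 0) (hm1 : a (-1) = 0)
    (htop : a (n + 1) = 0) (t₁ t₂ : ℝ) (z : ℂ) :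
    ∑ r ∈ range (n + 2), mulCoeff a t₁ t₂ r * z ^ r
      = (z - t₁) * (z + t₂) * ∑ j ∈ range (n + 1), a j * z ^ j - a n * z ^ (n + 2) := by
  have h₂ := sum_range_add_two_mul_pow_sub_two hm1 hm2 z n
  have h₁ := sum_range_succ_mul_pow_sub_one hm1 z (n + 1)
  have h₀ : ∑ r ∈ range (n + 2), a r * z ^ r = ∑ j ∈ range (n + 1), a j * z ^ j := by
    rw [sum_range_succ]; push_cast; rw [htop, zero_mul, add_zero]
  simp only [mulCoeff, sub_mul, add_mul, sum_sub_distrib, sum_add_distrib, mul_assoc, ← mul_sum]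
  rw [h₂, h₁, h₀, sum_range_succ]
  push_cast
  ring

section Telescoping

variable (b : ℤ → ℝ) (t₁ t₂ : ℝ)

def normPotential (i : ℕ) : ℝ := (t₂ * b (i - 1) + b (i - 2)) * t₁ ^ i

lemma normCombo_mul_pow (r : ℕ) :
    normCombo b t₁ t₂ r * t₁ ^ r = normPotential b t₁ t₂ (r + 1) - normPotential b t₁ t₂ r := by
  simp only [normCombo, normPotential, Nat.cast_add, Nat.cast_one, add_sub_cancel_right,
    add_sub_assoc, show (1 : ℤ) - 2 = -1 by norm_num, ← sub_eq_add_neg, pow_succ]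
  ring

lemma normPotential_add_one (i : ℕ) :
    normPotential b t₁ t₂ (i + 1) = (t₂ * b i + b (i - 1)) * t₁ ^ (i + 1) := by
  simp only [normPotential]; push_cast; ring_nf

variable {b t₁ t₂}

lemma sum_normCombo_mul_pow (hb₁ : b (-1) = 0) (hb₂ : b (-2) = 0) (N : ℕ) :
    ∑ r ∈ range N, normCombo b t₁ t₂ r * t₁ ^ r = normPotential b t₁ t₂ N := by
  simp only [normCombo_mul_pow, sum_range_sub]
  simp [normPotential, hb₁, hb₂]

variable {k n : ℕ}

lemma normCombo_mul_pow_nonneg (ht₁ : 0 ≤ t₁) (ht₂ : 0 ≤ t₂) (hb₀ : 0 ≤ b 0) (hb₁ : b (-1) = 0)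
    (hb₂ : b (-2) = 0) (hc₁ : ∀ r : ℤ, 1 ≤ r → r ≤ k + 1 → 0 ≤ normCombo b t₁ t₂ r) :
    ∀ r < k + 2, 0 ≤ normCombo b t₁ t₂ r * t₁ ^ r := by
  intro r hr
  refine mul_nonneg ?_ (pow_nonneg ht₁ r)
  rcases Nat.eq_zero_or_pos r with rfl | hr₀
  · simp only [normCombo, Nat.cast_zero, zero_sub, hb₁, hb₂, mul_zero, add_zero,
      sub_zero]
    positivity
  · exact hc₁ r (by omega) (by omega)

lemma normCombo_mul_pow_nonpos (ht₁ : 0 ≤ t₁)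
    (hc₂ : ∀ r : ℤ, k + 2 ≤ r → r ≤ n + 1 → normCombo b t₁ t₂ r ≤ 0) :
    ∀ r ∈ Ico (k + 2) (n + 1), normCombo b t₁ t₂ r * t₁ ^ r ≤ 0 := by
  intro r hr
  rw [mem_Ico] at hr
  exact mul_nonpos_of_nonpos_of_nonneg (hc₂ r (by omega) (by omega)) (pow_nonneg ht₁ r)

lemma normPotential_le (ht₁ : 0 ≤ t₁) (hb₁ : b (-1) = 0) (hb₂ : b (-2) = 0) (hk : k + 1 ≤ n)
    (hc₂ : ∀ r : ℤ, k + 2 ≤ r → r ≤ n + 1 → normCombo b t₁ t₂ r ≤ 0) :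
    normPotential b t₁ t₂ (n + 1) ≤ normPotential b t₁ t₂ (k + 2) := by
  simpa only [sum_normCombo_mul_pow hb₁ hb₂] using
    sum_range_le_of_nonpos (by omega) (normCombo_mul_pow_nonpos ht₁ hc₂)

lemma sum_coeffBound_mul_pow (α : ℝ) (ht₁ : 0 ≤ t₁) (ht₂ : 0 ≤ t₂) (hb₀ : 0 ≤ b 0)
    (hb₁ : b (-1) = 0) (hb₂ : b (-2) = 0) (hk : k + 1 ≤ n)
    (hc₁ : ∀ r : ℤ, 1 ≤ r → r ≤ k + 1 → 0 ≤ normCombo b t₁ t₂ r)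
    (hc₂ : ∀ r : ℤ, k + 2 ≤ r → r ≤ n + 1 → normCombo b t₁ t₂ r ≤ 0) :
    ∑ r ∈ range (n + 1), coeffBound b t₁ t₂ α r * t₁ ^ r
      = cos α * (2 * normPotential b t₁ t₂ (k + 2) - normPotential b t₁ t₂ (n + 1))
        + sin α * (2 * (t₁ ^ 2 * ∑ j ∈ range (n - 1), b j * t₁ ^ j)
          + normPotential b t₁ t₂ (n + 1)) := by
  have hsplit : ∀ r : ℕ, coeffBound b t₁ t₂ α r * t₁ ^ r
      = cos α * |normCombo b t₁ t₂ r * t₁ ^ r|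
        + sin α * (2 * (b (r - 2) * t₁ ^ r) + normCombo b t₁ t₂ r * t₁ ^ r) := by
    intro r
    rw [abs_mul, abs_of_nonneg (pow_nonneg ht₁ r), coeffBound, normCombo]
    ring
  have habs := sum_range_abs_eq_of_nonneg_of_nonpos (by omega)
    (normCombo_mul_pow_nonneg ht₁ ht₂ hb₀ hb₁ hb₂ hc₁) (normCombo_mul_pow_nonpos ht₁ hc₂)
  have hshift := sum_range_add_two_mul_pow_sub_two hb₁ hb₂ t₁ (n - 1)
  rw [show n - 1 + 2 = n + 1 by omega] at hshift
  simp only [hsplit, sum_add_distrib, ← mul_sum, habs, hshift, sum_normCombo_mul_pow hb₁ hb₂]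

lemma normPotential_le_sq_mul_sum (ht₁ : 0 ≤ t₁) (ht₁₂ : t₂ ≤ t₁) (hb : ∀ j, 0 ≤ b j)
    (hk : k + 3 ≤ n) :
    normPotential b t₁ t₂ (k + 2) ≤ t₁ ^ 2 * ∑ j ∈ range (n - 1), b j * t₁ ^ j := by
  have hsub : ({k, k + 1} : Finset ℕ) ⊆ range (n - 1) := by
    intro j hj; simp only [mem_insert, mem_singleton] at hj; rw [mem_range]; omega
  calc normPotential b t₁ t₂ (k + 2) = (t₂ * b (k + 1) + b k) * t₁ ^ (k + 2) := by
        simp only [normPotential]; push_cast; ring_nf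
    _ ≤ (t₁ * b (k + 1) + b k) * t₁ ^ (k + 2) := by have := hb (k + 1); gcongr
    _ = t₁ ^ 2 * ∑ j ∈ {k, k + 1}, b j * t₁ ^ j := by
        rw [sum_pair (by omega)]; push_cast; ring
    _ ≤ t₁ ^ 2 * ∑ j ∈ range (n - 1), b j * t₁ ^ j := by
        gcongr
        intro j _ _
        have := hb j
        positivity

lemma pow_mul_add_coeffBound_le (α : ℝ) (ht₁ : 0 ≤ t₁) (ht₂ : 0 ≤ t₂) (ht₁₂ : t₂ ≤ t₁)
    (hb : ∀ j, 0 ≤ b j) (hb₁ : b (-1) = 0) (hb₂ : b (-2) = 0) (htop : b (n + 1) = 0)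
    (hk : k + 3 ≤ n) (hsin : 0 ≤ sin α) (hcos : 0 ≤ cos α) (hcs : 1 ≤ cos α + sin α)
    (hc₁ : ∀ r : ℤ, 1 ≤ r → r ≤ k + 1 → 0 ≤ normCombo b t₁ t₂ r)
    (hc₂ : ∀ r : ℤ, k + 2 ≤ r → r ≤ n + 1 → normCombo b t₁ t₂ r ≤ 0) :
    t₁ ^ (n + 1) * (t₁ * b n + coeffBound b t₁ t₂ α (n + 1))
      ≤ ∑ r ∈ range (n + 1), coeffBound b t₁ t₂ α r * t₁ ^ r := by
  rw [sum_coeffBound_mul_pow α ht₁ ht₂ (hb 0) hb₁ hb₂ (by omega) hc₁ hc₂]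
  have hF := normPotential_le ht₁ hb₁ hb₂ (by omega) hc₂
  have hsum := normPotential_le_sq_mul_sum ht₁ ht₁₂ hb hk
  have hshift : (n : ℤ) + 1 - 2 = n - 1 := by ring
  have hM : normCombo b t₁ t₂ (n + 1) = (t₁ - t₂) * b n - b (n - 1) := by
    simp only [normCombo, htop, add_sub_cancel_right, hshift]; ring
  have hM_le : (t₁ - t₂) * b n ≤ b (n - 1) := by
    linarith [hM ▸ hc₂ (n + 1) (by omega) le_rfl]
  have hcb : coeffBound b t₁ t₂ α (n + 1)
      = (b (n - 1) - (t₁ - t₂) * b n) * cos α + (b (n - 1) + (t₁ - t₂) * b n) * sin α := by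
    rw [coeffBound, hM, abs_of_nonpos (by linarith)]
    simp only [htop, add_sub_cancel_right, hshift]; ring
  have hFn := normPotential_add_one b t₁ t₂ n
  rw [hcb, hFn]
  rw [hFn] at hF
  set G := t₁ ^ (n + 1)
  have hG : 0 ≤ G := pow_nonneg ht₁ _
  -- `cos α + sin α ≥ 1` absorbs the extra `t₁ b n`; the other gaps come from the sign conditions.
  have h₁ : 0 ≤ G * (t₁ * b n) * (cos α + sin α - 1) :=
    mul_nonneg (mul_nonneg hG (mul_nonneg ht₁ (hb n))) (by linarith)
  have h₂ : 0 ≤ cos α * (normPotential b t₁ t₂ (k + 2) - (t₂ * b n + b (n - 1)) * G) :=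
    mul_nonneg hcos (by linarith)
  have h₃ : 0 ≤ sin α * (G * (t₂ * b n)) := by have := hb n; positivity
  have h₄ : 0 ≤ sin α * (G * (b (n - 1) - (t₁ - t₂) * b n)) :=
    mul_nonneg hsin (mul_nonneg hG (by linarith))
  have h₅ : 0 ≤ sin α
      * (t₁ ^ 2 * ∑ j ∈ range (n - 1), b j * t₁ ^ j - normPotential b t₁ t₂ (k + 2)) :=
    mul_nonneg hsin (by linarith)
  have h₆ : 0 ≤ sin α * (normPotential b t₁ t₂ (k + 2) - (t₂ * b n + b (n - 1)) * G) :=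
    mul_nonneg hsin (by linarith)
  linear_combination h₁ + 2 * h₂ + 2 * h₃ + 2 * h₄ + 2 * h₅ + 2 * h₆

lemma mul_pow_mul_bound_eq (α : ℝ) (ht₁ : 0 < t₁) (hbn : 0 < b n) (hk : k + 1 ≤ n) :
    b n * t₁ ^ (n + 1) * ((2 * t₂ * b (k + 1) + 2 * b k) / (b n * t₁ ^ (n - k - 1)) * cos α
        + (2 * sin α / b n) * ∑ ν ∈ range (n - 1), b ν / t₁ ^ (n - ν - 1)
        + (t₂ + b (n - 1) / b n) * (sin α - cos α))
      = cos α * (2 * normPotential b t₁ t₂ (k + 2) - normPotential b t₁ t₂ (n + 1))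
        + sin α * (2 * (t₁ ^ 2 * ∑ j ∈ range (n - 1), b j * t₁ ^ j)
          + normPotential b t₁ t₂ (n + 1)) := by
  have hsum : t₁ ^ (n + 1) * ∑ ν ∈ range (n - 1), b ν / t₁ ^ (n - ν - 1)
      = t₁ ^ 2 * ∑ j ∈ range (n - 1), b j * t₁ ^ j := by
    rw [mul_sum, mul_sum]
    refine sum_congr rfl fun ν hν => ?_
    rw [mem_range] at hν
    rw [show n + 1 = (n - ν - 1) + 2 + ν by omega, pow_add, pow_add]
    field_simp
  have hpow : t₁ ^ (n + 1) = t₁ ^ (n - k - 1) * t₁ ^ (k + 2) := by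
    rw [← pow_add]; congr 1; omega
  have hFk : normPotential b t₁ t₂ (k + 2) = (t₂ * b (k + 1) + b k) * t₁ ^ (k + 2) := by
    simp only [normPotential]; push_cast; ring_nf
  have hFn := normPotential_add_one b t₁ t₂ n
  rw [hFk, hFn, ← hsum, hpow]
  field_simp
  ring

end Telescoping

section Root

variable {a : ℤ → ℂ} {n k : ℕ} {α t₁ t₂ : ℝ} {c z : ℂ}

lemma norm_mul_cos_le_re_exp_mul_coeff {β : ℝ} (hα : α ≤ π / 2)
    (harg : ∀ j : ℤ, 0 ≤ j → j ≤ n → |Complex.arg (a j) - β| ≤ α)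
    (hm2 : a (-2) = 0) (hm1 : a (-1) = 0) (htop : a (n + 1) = 0) :
    ∀ j : ℤ, -2 ≤ j → j ≤ n + 1 → ‖a j‖ * cos α ≤ (Complex.exp (-β * Complex.I) * a j).re := by
  intro j hj hj'
  obtain rfl | rfl | hj₀ | rfl : j = -2 ∨ j = -1 ∨ (0 ≤ j ∧ j ≤ n) ∨ j = n + 1 := by omega
  · simp [hm2]
  · simp [hm1]
  · exact norm_mul_cos_le_re_exp_mul hα (harg j hj₀.1 hj₀.2)
  · simp [htop]

lemma add_mulCoeff_add_one_div (htop : a (n + 1) = 0) (han : a n ≠ 0) :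
    z + mulCoeff a t₁ t₂ (n + 1) / a n = z + a (n - 1) / a n - (t₁ - t₂ : ℝ) := by
  simp only [mulCoeff, htop, add_sub_cancel_right, show (n : ℤ) + 1 - 2 = n - 1 by ring]
  field_simp
  ring

lemma mul_pow_eq_sum_neg_mulCoeff (hm2 : a (-2) = 0) (hm1 : a (-1) = 0) (htop : a (n + 1) = 0)
    (han : a n ≠ 0) (hz : ∑ j ∈ range (n + 1), a j * z ^ j = 0) :
    a n * (z + mulCoeff a t₁ t₂ (n + 1) / a n) * z ^ (n + 1)
      = ∑ r ∈ range (n + 1), -mulCoeff a t₁ t₂ r * z ^ r := by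
  have h := sum_mulCoeff_mul_pow hm2 hm1 htop t₁ t₂ z
  rw [hz, mul_zero, zero_sub, sum_range_succ] at h
  push_cast at h
  rw [mul_add, mul_div_cancel₀ _ han]
  simp only [neg_mul, sum_neg_distrib]
  linear_combination h

lemma norm_mul_pow_mul_norm_le_of_le_norm (hm2 : a (-2) = 0) (hm1 : a (-1) = 0)
    (htop : a (n + 1) = 0) (han : a n ≠ 0) (hc : ‖c‖ = 1) (hsin : 0 ≤ sin α) (hcos : 0 ≤ cos α)
    (ht₁ : 0 < t₁) (ht₂ : 0 ≤ t₂) (ht₁₂ : t₂ ≤ t₁)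
    (hsec : ∀ j : ℤ, -2 ≤ j → j ≤ n → ‖a j‖ * cos α ≤ (c * a j).re)
    (hroot : ∑ j ∈ range (n + 1), a j * z ^ j = 0) (hz : t₁ ≤ ‖z‖) :
    ‖a n‖ * t₁ ^ (n + 1) * ‖z + mulCoeff a t₁ t₂ (n + 1) / a n‖
      ≤ ∑ r ∈ range (n + 1), coeffBound (‖a ·‖) t₁ t₂ α r * t₁ ^ r := by
  calc ‖a n‖ * t₁ ^ (n + 1) * ‖z + mulCoeff a t₁ t₂ (n + 1) / a n‖
      = ‖a n * (z + mulCoeff a t₁ t₂ (n + 1) / a n)‖ * t₁ ^ (n + 1) := by rw [norm_mul]; ring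
    _ ≤ ∑ r ∈ range (n + 1), ‖-mulCoeff a t₁ t₂ r‖ * t₁ ^ r :=
        norm_mul_pow_le_of_eq_sum ht₁ hz (mul_pow_eq_sum_neg_mulCoeff hm2 hm1 htop han hroot)
    _ ≤ ∑ r ∈ range (n + 1), coeffBound (‖a ·‖) t₁ t₂ α r * t₁ ^ r := by
        gcongr with r hr
        rw [norm_neg]
        refine norm_mulCoeff_le hc hsin hcos ht₂ ht₁₂ fun j hj hj' => hsec j (by omega) ?_
        have := mem_range.1 hr
        omega

lemma norm_mul_norm_le_of_norm_le (han : a n ≠ 0) (hc : ‖c‖ = 1) (hsin : 0 ≤ sin α)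
    (hcos : 0 ≤ cos α) (ht₂ : 0 ≤ t₂) (ht₁₂ : t₂ ≤ t₁)
    (hsec : ∀ j : ℤ, n - 1 ≤ j → j ≤ n + 1 → ‖a j‖ * cos α ≤ (c * a j).re) (hz : ‖z‖ ≤ t₁) :
    ‖a n‖ * ‖z + mulCoeff a t₁ t₂ (n + 1) / a n‖
      ≤ t₁ * ‖a n‖ + coeffBound (‖a ·‖) t₁ t₂ α (n + 1) := by
  calc ‖a n‖ * ‖z + mulCoeff a t₁ t₂ (n + 1) / a n‖
      = ‖a n * z + mulCoeff a t₁ t₂ (n + 1)‖ := by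
        rw [← norm_mul, mul_add, mul_div_cancel₀ _ han]
    _ ≤ ‖a n‖ * ‖z‖ + ‖mulCoeff a t₁ t₂ (n + 1)‖ := (norm_add_le _ _).trans_eq (by rw [norm_mul])
    _ ≤ t₁ * ‖a n‖ + coeffBound (‖a ·‖) t₁ t₂ α (n + 1) := by
        rw [mul_comm t₁]
        gcongr
        exact norm_mulCoeff_le hc hsin hcos ht₂ ht₁₂ fun j hj hj' => hsec j (by omega) hj'

lemma norm_mul_pow_mul_norm_le_sum_coeffBound (hm2 : a (-2) = 0) (hm1 : a (-1) = 0)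
    (htop : a (n + 1) = 0) (han : a n ≠ 0) (hc : ‖c‖ = 1) (hsin : 0 ≤ sin α) (hcos : 0 ≤ cos α)
    (ht₁ : 0 < t₁) (ht₂ : 0 ≤ t₂) (ht₁₂ : t₂ ≤ t₁) (hk : k + 3 ≤ n)
    (hsec : ∀ j : ℤ, -2 ≤ j → j ≤ n + 1 → ‖a j‖ * cos α ≤ (c * a j).re)
    (hc₁ : ∀ r : ℤ, 1 ≤ r → r ≤ k + 1 → 0 ≤ normCombo (‖a ·‖) t₁ t₂ r)
    (hc₂ : ∀ r : ℤ, k + 2 ≤ r → r ≤ n + 1 → normCombo (‖a ·‖) t₁ t₂ r ≤ 0)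
    (hroot : ∑ j ∈ range (n + 1), a j * z ^ j = 0) :
    ‖a n‖ * t₁ ^ (n + 1) * ‖z + mulCoeff a t₁ t₂ (n + 1) / a n‖
      ≤ ∑ r ∈ range (n + 1), coeffBound (‖a ·‖) t₁ t₂ α r * t₁ ^ r := by
  rcases le_or_gt t₁ ‖z‖ with hz | hz
  · exact norm_mul_pow_mul_norm_le_of_le_norm hm2 hm1 htop han hc hsin hcos ht₁ ht₂ ht₁₂
      (fun j hj hj' => hsec j hj (by omega)) hroot hz
  · calc ‖a n‖ * t₁ ^ (n + 1) * ‖z + mulCoeff a t₁ t₂ (n + 1) / a n‖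
        = t₁ ^ (n + 1) * (‖a n‖ * ‖z + mulCoeff a t₁ t₂ (n + 1) / a n‖) := by ring
      _ ≤ t₁ ^ (n + 1) * (t₁ * ‖a n‖ + coeffBound (‖a ·‖) t₁ t₂ α (n + 1)) := by
        gcongr
        exact norm_mul_norm_le_of_norm_le han hc hsin hcos ht₂ ht₁₂
          (fun j hj hj' => hsec j (by omega) hj') hz.le
      _ ≤ ∑ r ∈ range (n + 1), coeffBound (‖a ·‖) t₁ t₂ α r * t₁ ^ r :=
        pow_mul_add_coeffBound_le α ht₁.le ht₂ ht₁₂ (fun j => norm_nonneg (a j))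
          (by simp [hm1]) (by simp [hm2]) (by simp [htop]) hk hsin hcos
          (one_le_cos_add_sin hsin hcos) hc₁ hc₂

end Root

theorem thm17_general (n k : ℕ) (a : ℤ → ℂ) (hk : k + 3 ≤ n)
    (han : a n ≠ 0)
    (α β : ℝ) (hα : α ≤ Real.pi / 2)
    (harg : ∀ j : ℤ, 0 ≤ j → j ≤ n → |Complex.arg (a j) - β| ≤ α)
    (hm2 : a (-2) = 0) (hm1 : a (-1) = 0) (htop : a (n + 1) = 0)
    (t1 t2 : ℝ) (ht1 : t1 ≠ 0) (ht12 : t2 ≤ t1) (ht2 : 0 ≤ t2)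
    (hc1 : ∀ r : ℤ, 1 ≤ r → r ≤ k + 1 →
      0 ≤ t1 * t2 * ‖a r‖ + (t1 - t2) * ‖a (r - 1)‖ -
        ‖a (r - 2)‖)
    (hc2 : ∀ r : ℤ, k + 2 ≤ r → r ≤ n + 1 →
      t1 * t2 * ‖a r‖ + (t1 - t2) * ‖a (r - 1)‖ -
        ‖a (r - 2)‖ ≤ 0)
    (z : ℂ) (hz : ∑ j ∈ Finset.range (n + 1), a j * z ^ j = 0) :
    ‖z + a (n - 1) / a n - ((t1 - t2 : ℝ) : ℂ)‖ ≤
      (2 * t2 * ‖a (k + 1)‖ + 2 * ‖a k‖) /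
        (‖a n‖ * t1 ^ (n - k - 1)) * Real.cos α
      + (2 * Real.sin α / ‖a n‖) *
          ∑ ν ∈ Finset.range (n - 1), ‖a ν‖ / t1 ^ (n - ν - 1)
      + (t2 + ‖a (n - 1) / a n‖) * (Real.sin α - Real.cos α) := by
  have ht1_pos : 0 < t1 := lt_of_le_of_ne (ht2.trans ht12) (Ne.symm ht1)
  have hα₀ : 0 ≤ α := (abs_nonneg _).trans (harg 0 le_rfl (Nat.cast_nonneg n))
  have hsin : 0 ≤ sin α := sin_nonneg_of_nonneg_of_le_pi hα₀ (by linarith [pi_pos])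
  have hcos : 0 ≤ cos α := cos_nonneg_of_mem_Icc ⟨by linarith [pi_pos], hα⟩
  have hunit : ‖Complex.exp (-β * Complex.I)‖ = 1 := by
    simpa using Complex.norm_exp_ofReal_mul_I (-β)
  have hL := norm_mul_pow_mul_norm_le_sum_coeffBound hm2 hm1 htop han hunit hsin hcos ht1_pos
    ht2 ht12 hk (norm_mul_cos_le_re_exp_mul_coeff hα harg hm2 hm1 htop) hc1 hc2 hz
  rw [add_mulCoeff_add_one_div htop han,
    sum_coeffBound_mul_pow α ht1_pos.le ht2 (norm_nonneg (a 0)) (by simp [hm1]) (by simp [hm2])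
      (by omega) hc1 hc2,
    ← mul_pow_mul_bound_eq (b := (‖a ·‖)) α ht1_pos (norm_pos_iff.2 han) (by omega)] at hL
  rw [norm_div]
  exact le_of_mul_le_mul_left hL (by positivity)

/-- Theorem 1.7 (main theorem). -/
theorem thm17 (n k : ℕ) (a : ℤ → ℂ) (hn : 3 ≤ n) (hk : k + 3 ≤ n)
    (han : a n ≠ 0)
    (α β : ℝ) (hα : α ≤ Real.pi / 2)
    (harg : ∀ j : ℤ, 0 ≤ j → j ≤ n → |Complex.arg (a j) - β| ≤ α)
    (hm2 : a (-2) = 0) (hm1 : a (-1) = 0) (htop : a (n + 1) = 0)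
    (t1 t2 : ℝ) (ht1 : t1 ≠ 0) (ht12 : t2 ≤ t1) (ht2 : 0 ≤ t2)
    (hc1 : ∀ r : ℤ, 1 ≤ r → r ≤ k + 1 →
      0 ≤ t1 * t2 * ‖a r‖ + (t1 - t2) * ‖a (r - 1)‖ -
        ‖a (r - 2)‖)
    (hc2 : ∀ r : ℤ, k + 2 ≤ r → r ≤ n + 1 →
      t1 * t2 * ‖a r‖ + (t1 - t2) * ‖a (r - 1)‖ -
        ‖a (r - 2)‖ ≤ 0)
    (z : ℂ) (hz : ∑ j ∈ Finset.range (n + 1), a j * z ^ j = 0) :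
    ‖z + a (n - 1) / a n - ((t1 - t2 : ℝ) : ℂ)‖ ≤
      (2 * t2 * ‖a (k + 1)‖ + 2 * ‖a k‖) /
        (‖a n‖ * t1 ^ (n - k - 1)) * Real.cos α
      + (2 * Real.sin α / ‖a n‖) *
          ∑ ν ∈ Finset.range (n - 1), ‖a ν‖ / t1 ^ (n - ν - 1)
      + (t2 + ‖a (n - 1) / a n‖) * (Real.sin α - Real.cos α) :=
  thm17_general n k a hk han α β hα harg hm2 hm1 htop t1 t2 ht1 ht12 ht2 hc1 hc2 z hz
end

section
/- Let P(z) = Σ_{j=0}^n a_j z^j be a polynomial of degree n ≥ 3 with complex coefficients such that |arg a_j − β| ≤ α ≤ π/2 for all j, for some real β. Suppose t > 0 satisfies t^n|a_n| ≤ t^{n-1}|a_{n-1}| ≤ ... ≤ t^{k+1}|a_{k+1}| ≤ t^k|a_k| and t^k|a_k| ≥ t^{k-1}|a_{k-1}| ≥ ... ≥ t|a_1| ≥ |a_0| > 0, where 0 ≤ k ≤ n−3. Then every zero z of P satisfies |z + a_{n-1}/a_n − t| ≤ |a_{n-1}/a_n|(sin α − cos α) + (2|a_k| cos α)/(|a_n|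 t^{n-k-1}) + (2 sin α/|a_n|) Σ_{ν=0}^{n-2} |a_ν|/t^{n-ν-1}. -/
/-!
Put `w j = t ^ j * a j`, so that `z = t * u` turns `P` into `∑ w j * u ^ j` and the moduli
`‖w j‖` increase up to `k` and decrease after. Multiplying by `u - 1` gives
`u ^ (n - 1) * (w n * u + w (n - 1) - w n) = w 0 + ∑ j < n - 1, (w (j + 1) - w j) * u ^ (j + 1)`,
so for `‖z‖ ≥ t` the quantity `t ^ (n - 1) * ‖a n * z + a (n - 1) - t * a n‖` is at most
`‖w 0‖ + ∑ ‖w (j + 1) - w j‖`. Two points of the sector with moduli `r`, `s` are at distance at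
most `|r - s| cos α + (r + s) sin α`, and by unimodality the `|r - s|` terms telescope to
`2 ‖w k‖ - ‖w 0‖ - ‖w (n - 1)‖`. For `‖z‖ ≤ t` the triangle inequality and the same sector
estimate for `w (n - 1) - w n` give the same bound. Dividing by `‖a n‖ * t ^ (n - 1)` yields the
claim.
-/

open Real Finset

theorem norm_sub_le_of_abs_arg_sub_le {x y : ℂ} {α β : ℝ} (hα : α ≤ π / 2)
    (hx : |x.arg - β| ≤ α) (hy : |y.arg - β| ≤ α) :
    ‖x - y‖ ≤ |‖x‖ - ‖y‖| * cos α + (‖x‖ + ‖y‖) * sin α := by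
  have hα0 : 0 ≤ α := (abs_nonneg _).trans hx
  have hsin : 0 ≤ sin α := sin_nonneg_of_nonneg_of_le_pi hα0 (by linarith [pi_pos])
  have hcos : 0 ≤ cos α := cos_nonneg_of_mem_Icc ⟨by linarith [pi_pos], hα⟩
  have hangle : |x.arg - y.arg| ≤ 2 * α := by
    calc |x.arg - y.arg| = |(x.arg - β) - (y.arg - β)| := by ring_nf
      _ ≤ |x.arg - β| + |y.arg - β| := abs_sub _ _
      _ ≤ 2 * α := by linarith
  have hcos_angle : 1 - 2 * sin α ^ 2 ≤ cos (x.arg - y.arg) := by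
    rw [← cos_abs (x.arg - y.arg)]
    calc 1 - 2 * sin α ^ 2 = cos (2 * α) := by rw [cos_two_mul, cos_sq']; ring
      _ ≤ cos |x.arg - y.arg| :=
        cos_le_cos_of_nonneg_of_le_pi (abs_nonneg _) (by linarith) hangle
  have hlaw : ‖x - y‖ ^ 2 = ‖x‖ ^ 2 + ‖y‖ ^ 2 - 2 * ‖x‖ * ‖y‖ * cos (x.arg - y.arg) := by
    rw [Complex.sq_norm, Complex.normSq_apply, Complex.sub_re, Complex.sub_im,
      ← Complex.norm_mul_cos_arg x, ← Complex.norm_mul_sin_arg x,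
      ← Complex.norm_mul_cos_arg y, ← Complex.norm_mul_sin_arg y, cos_sub]
    nlinarith [sin_sq_add_cos_sq x.arg, sin_sq_add_cos_sq y.arg]
  have hsq : ‖x - y‖ ^ 2 ≤ (|‖x‖ - ‖y‖| * cos α + (‖x‖ + ‖y‖) * sin α) ^ 2 := by
    have hcross : 0 ≤ |‖x‖ - ‖y‖| * (‖x‖ + ‖y‖) * (sin α * cos α) := by positivity
    have hprod : 0 ≤ ‖x‖ * ‖y‖ := by positivity
    nlinarith [sq_abs (‖x‖ - ‖y‖), sin_sq_add_cos_sq α, mul_le_mul_of_nonneg_left hcos_angle hprod]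
  exact abs_le_of_sq_le_sq' hsq (by positivity) |>.2

theorem Finset.sum_range_abs_sub_of_unimodal (g : ℕ → ℝ) {k M : ℕ} (hkM : k ≤ M)
    (hup : ∀ j < k, g j ≤ g (j + 1)) (hdown : ∀ j, k ≤ j → j < M → g (j + 1) ≤ g j) :
    ∑ j ∈ range M, |g (j + 1) - g j| = 2 * g k - g 0 - g M := by
  have hinc : ∑ j ∈ range k, |g (j + 1) - g j| = g k - g 0 := by
    rw [← sum_range_sub]
    exact sum_congr rfl fun j hj => abs_of_nonneg (sub_nonneg.2 (hup j (mem_range.1 hj)))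
  have hdec : ∑ j ∈ Ico k M, |g (j + 1) - g j| = g k - g M := by
    rw [← neg_sub, ← sum_Ico_sub g hkM, ← sum_neg_distrib]
    refine sum_congr rfl fun j hj => abs_of_nonpos (sub_nonpos.2 ?_)
    exact hdown j (mem_Ico.1 hj).1 (mem_Ico.1 hj).2
  rw [← sum_range_add_sum_Ico _ hkM, hinc, hdec]
  ring

theorem sum_range_mul_pow_mul_sub_one (w : ℕ → ℂ) (u : ℂ) (m : ℕ) :
    (∑ j ∈ range (m + 2), w j * u ^ j) * (u - 1) =
      u ^ (m + 1) * (w (m + 1) * u + w m - w (m + 1))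
        - (w 0 + ∑ j ∈ range m, (w (j + 1) - w j) * u ^ (j + 1)) := by
  induction m with
  | zero => simp only [sum_range_succ, range_zero, sum_empty]; ring
  | succ m ih =>
    rw [sum_range_succ, add_mul, ih, sum_range_succ _ m]
    ring

theorem norm_lead_sub_le_of_sum_eq_zero {w : ℕ → ℂ} {u : ℂ} {m : ℕ} (hu : 1 ≤ ‖u‖)
    (hroot : ∑ j ∈ range (m + 2), w j * u ^ j = 0) :
    ‖w (m + 1) * u + w m - w (m + 1)‖ ≤ ‖w 0‖ + ∑ j ∈ range m, ‖w (j + 1) - w j‖ := by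
  have hu0 : 0 < ‖u‖ ^ (m + 1) := pow_pos (zero_lt_one.trans_le hu) _
  have hfactor := sum_range_mul_pow_mul_sub_one w u m
  rw [hroot, zero_mul, eq_comm, sub_eq_zero] at hfactor
  refine le_of_mul_le_mul_left ?_ hu0
  calc ‖u‖ ^ (m + 1) * ‖w (m + 1) * u + w m - w (m + 1)‖
      = ‖w 0 + ∑ j ∈ range m, (w (j + 1) - w j) * u ^ (j + 1)‖ := by
        rw [← hfactor, norm_mul, norm_pow]
    _ ≤ ‖w 0‖ + ∑ j ∈ range m, ‖w (j + 1) - w j‖ * ‖u‖ ^ (j + 1) := by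
        refine (norm_add_le _ _).trans (add_le_add_right ((norm_sum_le _ _).trans ?_) _)
        simp only [norm_mul, norm_pow, le_refl]
    _ ≤ ‖u‖ ^ (m + 1) * ‖w 0‖ + ∑ j ∈ range m, ‖w (j + 1) - w j‖ * ‖u‖ ^ (m + 1) := by
        gcongr with j hj
        · exact le_mul_of_one_le_left (norm_nonneg _) (one_le_pow₀ hu)
        · exact (mem_range.1 hj).le
    _ = ‖u‖ ^ (m + 1) * (‖w 0‖ + ∑ j ∈ range m, ‖w (j + 1) - w j‖) := by
        rw [← sum_mul]; ring

theorem one_le_sin_add_cos {α : ℝ} (h0 : 0 ≤ α) (h2 : α ≤ π / 2) : 1 ≤ sin α + cos α := by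
  have hs : 0 ≤ sin α := sin_nonneg_of_nonneg_of_le_pi h0 (by linarith [pi_pos])
  have hc : 0 ≤ cos α := cos_nonneg_of_mem_Icc ⟨by linarith [pi_pos], h2⟩
  nlinarith [sin_sq_add_cos_sq α]

section Sector

variable {a : ℕ → ℂ} {α β t : ℝ} {k m : ℕ} {z : ℂ}

theorem norm_pow_mul_sub_pow_mul_le {x y : ℂ} (ht : 0 < t) (hα : α ≤ π / 2)
    (hx : |x.arg - β| ≤ α) (hy : |y.arg - β| ≤ α) (i j : ℕ) :
    ‖(t : ℂ) ^ i * x - (t : ℂ) ^ j * y‖ ≤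
      |t ^ i * ‖x‖ - t ^ j * ‖y‖| * cos α + (t ^ i * ‖x‖ + t ^ j * ‖y‖) * sin α := by
  have harg (l : ℕ) (w : ℂ) : ((t : ℂ) ^ l * w).arg = w.arg := by
    rw [← Complex.ofReal_pow, Complex.arg_real_mul w (pow_pos ht l)]
  have hnorm (l : ℕ) (w : ℂ) : ‖(t : ℂ) ^ l * w‖ = t ^ l * ‖w‖ := by
    rw [norm_mul, norm_pow, Complex.norm_real, norm_of_nonneg ht.le]
  have h := norm_sub_le_of_abs_arg_sub_le hα (harg i x ▸ hx) (harg j y ▸ hy)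
  rwa [hnorm, hnorm] at h

theorem pow_mul_norm_lead_sub_le_of_sum_eq_zero (ht : 0 < t) (hz : t ≤ ‖z‖)
    (hroot : ∑ j ∈ range (m + 2), a j * z ^ j = 0) :
    t ^ m * ‖a (m + 1) * z + a m - t * a (m + 1)‖ ≤
      ‖a 0‖ + ∑ j ∈ range m, ‖(t : ℂ) ^ (j + 1) * a (j + 1) - (t : ℂ) ^ j * a j‖ := by
  have ht0 : (t : ℂ) ≠ 0 := Complex.ofReal_ne_zero.2 ht.ne'
  have hu : 1 ≤ ‖z / t‖ := by
    rw [norm_div, Complex.norm_real, norm_of_nonneg ht.le]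
    exact (one_le_div ht).2 hz
  have hroot' : ∑ j ∈ range (m + 2), (t : ℂ) ^ j * a j * (z / t) ^ j = 0 := by
    rw [← hroot]
    exact sum_congr rfl fun j _ => by rw [div_pow]; field_simp
  have key := norm_lead_sub_le_of_sum_eq_zero (w := fun j => (t : ℂ) ^ j * a j) hu hroot'
  have hlead : (t : ℂ) ^ (m + 1) * a (m + 1) * (z / t) + (t : ℂ) ^ m * a m
      - (t : ℂ) ^ (m + 1) * a (m + 1) = (t : ℂ) ^ m * (a (m + 1) * z + a m - t * a (m + 1)) := by
    field_simp
    ring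
  simpa only [hlead, norm_mul, norm_pow, Complex.norm_real, norm_of_nonneg ht.le, pow_zero,
    one_mul] using key

theorem pow_mul_norm_lead_sub_le_of_le_norm (hα : α ≤ π / 2) (harg : ∀ j ≤ m, |(a j).arg - β| ≤ α)
    (ht : 0 < t) (hkm : k ≤ m) (hup : ∀ j, j < k → t ^ j * ‖a j‖ ≤ t ^ (j + 1) * ‖a (j + 1)‖)
    (hdown : ∀ j, k ≤ j → j < m → t ^ (j + 1) * ‖a (j + 1)‖ ≤ t ^ j * ‖a j‖)
    (hz : t ≤ ‖z‖) (hroot : ∑ j ∈ range (m + 2), a j * z ^ j = 0) :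
    t ^ m * ‖a (m + 1) * z + a m - t * a (m + 1)‖ ≤
      cos α * (2 * (t ^ k * ‖a k‖) - t ^ m * ‖a m‖)
        + sin α * (t ^ m * ‖a m‖ + 2 * ∑ j ∈ range m, t ^ j * ‖a j‖) := by
  set r : ℕ → ℝ := fun j => t ^ j * ‖a j‖ with hr
  have hα0 : 0 ≤ α := (abs_nonneg _).trans (harg 0 (Nat.zero_le m))
  have hsc := one_le_sin_add_cos hα0 hα
  have hr0 : 0 ≤ r 0 := by positivity
  have hshift : ∑ j ∈ range m, r (j + 1) = ∑ j ∈ range m, r j + r m - r 0 := by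
    rw [← sum_range_succ, sum_range_succ']
    ring
  calc t ^ m * ‖a (m + 1) * z + a m - t * a (m + 1)‖
      ≤ ‖a 0‖ + ∑ j ∈ range m, ‖(t : ℂ) ^ (j + 1) * a (j + 1) - (t : ℂ) ^ j * a j‖ :=
        pow_mul_norm_lead_sub_le_of_sum_eq_zero ht hz hroot
    _ ≤ r 0 + ∑ j ∈ range m, (|r (j + 1) - r j| * cos α + (r (j + 1) + r j) * sin α) := by
        gcongr with j hj
        · simp [hr]
        · have hjm := mem_range.1 hj
          exact norm_pow_mul_sub_pow_mul_le ht hα (harg _ hjm) (harg _ hjm.le) _ _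
    _ = r 0 + cos α * (2 * r k - r 0 - r m)
          + sin α * (∑ j ∈ range m, r (j + 1) + ∑ j ∈ range m, r j) := by
        rw [← sum_range_abs_sub_of_unimodal r hkm hup hdown, sum_add_distrib, ← sum_mul,
          ← sum_mul, ← sum_add_distrib]
        ring
    _ ≤ cos α * (2 * r k - r m) + sin α * (r m + 2 * ∑ j ∈ range m, r j) := by
        rw [hshift]
        nlinarith [mul_le_mul_of_nonneg_left hsc hr0]

theorem pow_mul_norm_lead_sub_le_of_norm_le (hα : α ≤ π / 2)
    (harg : ∀ j ≤ m + 1, |(a j).arg - β| ≤ α) (ht : 0 < t) (hkm : k < m)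
    (hdown : ∀ j, k ≤ j → j < m + 1 → t ^ (j + 1) * ‖a (j + 1)‖ ≤ t ^ j * ‖a j‖)
    (hz : ‖z‖ ≤ t) :
    t ^ m * ‖a (m + 1) * z + a m - t * a (m + 1)‖ ≤
      cos α * (2 * (t ^ k * ‖a k‖) - t ^ m * ‖a m‖)
        + sin α * (t ^ m * ‖a m‖ + 2 * ∑ j ∈ range m, t ^ j * ‖a j‖) := by
  set r : ℕ → ℝ := fun j => t ^ j * ‖a j‖ with hr
  have hα0 : 0 ≤ α := (abs_nonneg _).trans (harg 0 (Nat.zero_le _))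
  have hsin : 0 ≤ sin α := sin_nonneg_of_nonneg_of_le_pi hα0 (by linarith [pi_pos])
  have hcos : 0 ≤ cos α := cos_nonneg_of_mem_Icc ⟨by linarith [pi_pos], hα⟩
  have hsc := one_le_sin_add_cos hα0 hα
  have hanti : AntitoneOn r (Set.Icc k (m + 1)) :=
    antitoneOn_of_add_one_le Set.ordConnected_Icc fun j _ hj hj1 => hdown j hj.1 hj1.2
  have hmk : r m ≤ r k := hanti ⟨le_rfl, by omega⟩ ⟨hkm.le, by omega⟩ hkm.le
  have hlast : r (m + 1) ≤ r m := hanti ⟨hkm.le, by omega⟩ ⟨by omega, le_rfl⟩ (by omega)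
  have hsum : r (m + 1) ≤ ∑ j ∈ range m, r j :=
    calc r (m + 1) ≤ r (m - 1) := hanti ⟨by omega, by omega⟩ ⟨by omega, le_rfl⟩ (by omega)
      _ ≤ ∑ j ∈ range m, r j :=
        single_le_sum (fun j _ => by positivity) (mem_range.2 (by omega))
  calc t ^ m * ‖a (m + 1) * z + a m - t * a (m + 1)‖
      ≤ t ^ m * (‖a (m + 1)‖ * t + ‖a m - t * a (m + 1)‖) := by
        rw [add_sub_assoc]
        gcongr
        refine (norm_add_le _ _).trans (add_le_add_left ?_ _)
        rw [norm_mul]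
        gcongr
    _ = r (m + 1) + ‖(t : ℂ) ^ m * a m - (t : ℂ) ^ (m + 1) * a (m + 1)‖ := by
        rw [show (t : ℂ) ^ m * a m - (t : ℂ) ^ (m + 1) * a (m + 1)
            = (t : ℂ) ^ m * (a m - t * a (m + 1)) by ring,
          norm_mul, norm_pow, Complex.norm_real, norm_of_nonneg ht.le, hr]
        ring
    _ ≤ r (m + 1) + (|r m - r (m + 1)| * cos α + (r m + r (m + 1)) * sin α) := by
        gcongr
        exact norm_pow_mul_sub_pow_mul_le ht hα (harg _ (by omega)) (harg _ le_rfl) _ _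
    _ ≤ cos α * (2 * r k - r m) + sin α * (r m + 2 * ∑ j ∈ range m, r j) := by
        have hr1 : 0 ≤ r (m + 1) := by positivity
        rw [abs_of_nonneg (sub_nonneg.2 hlast)]
        nlinarith [mul_le_mul_of_nonneg_left hsc hr1, mul_le_mul_of_nonneg_left hmk hcos,
          mul_le_mul_of_nonneg_left hsum hsin]

theorem pow_mul_norm_lead_sub_le (hα : α ≤ π / 2) (harg : ∀ j ≤ m + 1, |(a j).arg - β| ≤ α)
    (ht : 0 < t) (hkm : k < m) (hup : ∀ j, j < k → t ^ j * ‖a j‖ ≤ t ^ (j + 1) * ‖a (j + 1)‖)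
    (hdown : ∀ j, k ≤ j → j < m + 1 → t ^ (j + 1) * ‖a (j + 1)‖ ≤ t ^ j * ‖a j‖)
    (hroot : ∑ j ∈ range (m + 2), a j * z ^ j = 0) :
    t ^ m * ‖a (m + 1) * z + a m - t * a (m + 1)‖ ≤
      cos α * (2 * (t ^ k * ‖a k‖) - t ^ m * ‖a m‖)
        + sin α * (t ^ m * ‖a m‖ + 2 * ∑ j ∈ range m, t ^ j * ‖a j‖) := by
  rcases le_total t ‖z‖ with hz | hz
  · exact pow_mul_norm_lead_sub_le_of_le_norm hα (fun j hj => harg j (by omega)) ht hkm.le hup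
      (fun j hkj hjm => hdown j hkj (by omega)) hz hroot
  · exact pow_mul_norm_lead_sub_le_of_norm_le hα harg ht hkm hdown hz

end Sector

theorem cor19_general (n k : ℕ) (a : ℕ → ℂ) (hk : k + 3 ≤ n)
    (han : a n ≠ 0)
    (α β : ℝ) (hα : α ≤ Real.pi / 2)
    (harg : ∀ j ≤ n, |Complex.arg (a j) - β| ≤ α)
    (t : ℝ) (ht : 0 < t)
    (hup : ∀ j, j < k → t ^ j * ‖a j‖ ≤ t ^ (j + 1) * ‖a (j + 1)‖)
    (hdown : ∀ j, k ≤ j → j < n →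
      t ^ (j + 1) * ‖a (j + 1)‖ ≤ t ^ j * ‖a j‖)
    (z : ℂ) (hz : ∑ j ∈ Finset.range (n + 1), a j * z ^ j = 0) :
    ‖z + a (n - 1) / a n - (t : ℂ)‖ ≤
      ‖a (n - 1) / a n‖ * (Real.sin α - Real.cos α)
      + 2 * ‖a k‖ * Real.cos α / (‖a n‖ * t ^ (n - k - 1))
      + (2 * Real.sin α / ‖a n‖) *
          ∑ ν ∈ Finset.range (n - 1), ‖a ν‖ / t ^ (n - ν - 1) := by
  obtain ⟨m, rfl⟩ : ∃ m, n = m + 1 := ⟨n - 1, by omega⟩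
  simp only [Nat.add_sub_cancel, Nat.sub_sub, Nat.add_sub_add_right]
  have hweighted := pow_mul_norm_lead_sub_le hα harg ht (by omega) hup hdown hz
  have hN : 0 < ‖a (m + 1)‖ := norm_pos_iff.2 han
  have htm : 0 < t ^ m := pow_pos ht m
  have hlhs : z + a m / a (m + 1) - t = (a (m + 1) * z + a m - t * a (m + 1)) / a (m + 1) := by
    field_simp
  have hsum : ∑ ν ∈ range m, ‖a ν‖ / t ^ (m - ν) = (∑ ν ∈ range m, t ^ ν * ‖a ν‖) / t ^ m := by
    rw [sum_div]
    refine sum_congr rfl fun ν hν => ?_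
    rw [pow_sub₀ _ ht.ne' (mem_range.1 hν).le]
    field_simp
  rw [hlhs, norm_div, norm_div, hsum, pow_sub₀ _ ht.ne' (by omega : k ≤ m), div_le_iff₀ hN]
  rw [← le_div_iff₀' htm] at hweighted
  convert hweighted using 1
  field_simp
  ring

/-- Corollary 1.9 (case t₂ = 0 of Theorem 1.7). -/
theorem cor19 (n k : ℕ) (a : ℕ → ℂ) (hn : 3 ≤ n) (hk : k + 3 ≤ n)
    (han : a n ≠ 0)
    (α β : ℝ) (hα : α ≤ Real.pi / 2)
    (harg : ∀ j ≤ n, |Complex.arg (a j) - β| ≤ α)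
    (t : ℝ) (ht : 0 < t)
    (hup : ∀ j, j < k → t ^ j * ‖a j‖ ≤ t ^ (j + 1) * ‖a (j + 1)‖)
    (hdown : ∀ j, k ≤ j → j < n →
      t ^ (j + 1) * ‖a (j + 1)‖ ≤ t ^ j * ‖a j‖)
    (h0 : 0 < ‖a 0‖)
    (z : ℂ) (hz : ∑ j ∈ Finset.range (n + 1), a j * z ^ j = 0) :
    ‖z + a (n - 1) / a n - (t : ℂ)‖ ≤
      ‖a (n - 1) / a n‖ * (Real.sin α - Real.cos α)
      + 2 * ‖a k‖ * Real.cos α / (‖a n‖ * t ^ (n - k - 1))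
      + (2 * Real.sin α / ‖a n‖) *
          ∑ ν ∈ Finset.range (n - 1), ‖a ν‖ / t ^ (n - ν - 1) :=
  cor19_general n k a hk han α β hα harg t ht hup hdown z hz
end

section
/- Let P(z) = Σ_{j=0}^n a_j z^j be a polynomial of degree n ≥ 1 with real positive coefficients. Suppose t_1 ≠ 0, t_1 ≥ t_2 ≥ 0 satisfy t_1 t_2 a_r + (t_1 − t_2) a_{r-1} − a_{r-2} ≥ 0 for r = 1, ..., k+1 and ≤ 0 for r = k+2, ..., n+1, where 0 ≤ k ≤ n−1 and a_{-2} = a_{-1} = a_{n+1} = 0. Then every zero z of P satisfies |z + a_{n-1}/a_n − (t_1 − t_2)| ≤ t_2 + a_{n-1}/a_n + (2 t_2 a_{k+1} + 2 a_k)/(a_n t_1^{n-k-1}). -/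
/-!
Write `b r = t₂ a r + a (r - 1)` for the coefficients of `(z + t₂) P(z)`. The coefficients of
`(z - t₁)(z + t₂) P(z)` below degree `n + 1` are then `-(t₁ b r - b (r - 1))`, and the hypotheses
say exactly that `t₁ b r - b (r - 1)` is nonnegative up to `r = k + 1` and nonpositive afterwards.
At a zero `z` with `|z| ≥ t₁` this gives
`a n z ^ (n + 1) (z + a (n - 1) / a n - (t₁ - t₂)) = ∑ r ≤ n, (t₁ b r - b (r - 1)) z ^ r`,
and each of the two blocks of constant sign telescopes, as in the Eneström–Kakeya theorem, to at
most `b (k + 1) |z| ^ (n + 1) / t₁ ^ (n - k - 1)`. Inside the disc `|z| ≤ t₁` the bound is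
immediate.
-/

open Finset

-- The coefficient of `z ^ r` in `(z + t) * ∑ j, a j * z ^ j` when `a` vanishes at negative indices.
def coeffXAddMul {S : Type*} [Semiring S] (t : S) (a : ℤ → S) (r : ℤ) : S := t * a r + a (r - 1)

theorem add_mul_sum_range_pow {S : Type*} [CommSemiring S] (t z : S) (a : ℤ → S)
    (ha : a (-1) = 0) (n : ℕ) :
    (z + t) * ∑ j ∈ range (n + 1), a j * z ^ j
      = a n * z ^ (n + 1) + ∑ j ∈ range (n + 1), coeffXAddMul t a j * z ^ j := by
  induction n with
  | zero => simp [coeffXAddMul, ha]; ring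
  | succ n ih =>
    rw [sum_range_succ, mul_add, ih, sum_range_succ _ (n + 1), coeffXAddMul]
    push_cast
    rw [add_sub_cancel_right]
    ring

theorem RingHom.comp_coeffXAddMul {S T : Type*} [Semiring S] [Semiring T] (f : S →+* T) (t : S)
    (a : ℤ → S) : f ∘ coeffXAddMul t a = coeffXAddMul (f t) (f ∘ a) :=
  funext fun r => by simp [coeffXAddMul]

theorem coeffXAddMul_neg_coeffXAddMul (t1 t2 : ℝ) (a : ℤ → ℝ) (r : ℤ) :
    coeffXAddMul (-t1) (coeffXAddMul t2 a) r
      = -(t1 * t2 * a r + (t1 - t2) * a (r - 1) - a (r - 2)) := by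
  simp only [coeffXAddMul, sub_sub]
  norm_num
  ring

theorem pow_le_pow_mul_div_pow {t R : ℝ} (ht : 0 < t) (htR : t ≤ R) {i j : ℕ} (hij : i ≤ j) :
    R ^ i ≤ t ^ i * (R / t) ^ j :=
  calc R ^ i = t ^ i * (R / t) ^ i := by rw [← mul_pow, mul_div_cancel₀ _ ht.ne']
    _ ≤ t ^ i * (R / t) ^ j :=
      mul_le_mul_of_nonneg_left (pow_le_pow_right₀ ((one_le_div ht).2 htR) hij) (by positivity)

section Estimate

variable {b : ℤ → ℝ} {t R : ℝ} {m n : ℕ}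

theorem sum_range_abs_coeffXAddMul_mul_pow_le_of_nonpos (hb : b (-1) = 0)
    (hbnn : ∀ r : ℕ, r ≤ m → 0 ≤ b r) (hle : ∀ r : ℕ, r ≤ m → coeffXAddMul (-t) b r ≤ 0)
    (htR : t ≤ R) (hR : 0 ≤ R) :
    ∑ r ∈ range (m + 1), |coeffXAddMul (-t) b r| * R ^ r ≤ b m * R ^ (m + 1) := by
  have hid := add_mul_sum_range_pow (-t) R b hb m
  have hsum : 0 ≤ (R - t) * ∑ r ∈ range (m + 1), b r * R ^ r :=
    mul_nonneg (by linarith) (sum_nonneg fun r hr =>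
      mul_nonneg (hbnn r (Nat.lt_succ_iff.1 (mem_range.1 hr))) (pow_nonneg hR r))
  have habs : ∑ r ∈ range (m + 1), |coeffXAddMul (-t) b r| * R ^ r
      = -∑ r ∈ range (m + 1), coeffXAddMul (-t) b r * R ^ r := by
    rw [← sum_neg_distrib]
    refine sum_congr rfl fun r hr => ?_
    rw [abs_of_nonpos (hle r (Nat.lt_succ_iff.1 (mem_range.1 hr))), neg_mul]
  rw [← sub_eq_add_neg] at hid
  rw [habs]
  linarith

theorem sum_Ico_abs_coeffXAddMul_mul_pow_le_of_nonneg (hb : b (-1) = 0) (hbn : 0 ≤ b n)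
    (hmn : m ≤ n) (hge : ∀ r ∈ Ico (m + 1) (n + 1), 0 ≤ coeffXAddMul (-t) b r) (ht : 0 < t)
    (htR : t ≤ R) :
    ∑ r ∈ Ico (m + 1) (n + 1), |coeffXAddMul (-t) b r| * R ^ r
      ≤ b m * t ^ (m + 1) * (R / t) ^ (n + 1) := by
  -- At `R = t` the left side of `add_mul_sum_range_pow` vanishes.
  have htel : ∀ k, ∑ r ∈ range (k + 1), coeffXAddMul (-t) b r * t ^ r = -(b k * t ^ (k + 1)) := by
    intro k
    have := add_mul_sum_range_pow (-t) t b hb k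
    rw [add_neg_cancel, zero_mul] at this
    linarith
  calc ∑ r ∈ Ico (m + 1) (n + 1), |coeffXAddMul (-t) b r| * R ^ r
      ≤ ∑ r ∈ Ico (m + 1) (n + 1), coeffXAddMul (-t) b r * t ^ r * (R / t) ^ (n + 1) := by
        refine sum_le_sum fun r hr => ?_
        rw [abs_of_nonneg (hge r hr), mul_assoc]
        exact mul_le_mul_of_nonneg_left
          (pow_le_pow_mul_div_pow ht htR (mem_Ico.1 hr).2.le) (hge r hr)
    _ = (b m * t ^ (m + 1) - b n * t ^ (n + 1)) * (R / t) ^ (n + 1) := by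
        rw [← sum_mul, sum_Ico_eq_sub _ (by omega), htel, htel, neg_sub_neg]
    _ ≤ b m * t ^ (m + 1) * (R / t) ^ (n + 1) := by
        have : 0 ≤ b n * t ^ (n + 1) * (R / t) ^ (n + 1) :=
          mul_nonneg (mul_nonneg hbn (by positivity))
            (pow_nonneg (div_nonneg (ht.le.trans htR) ht.le) _)
        linarith [sub_mul (b m * t ^ (m + 1)) (b n * t ^ (n + 1)) ((R / t) ^ (n + 1))]

theorem sum_range_abs_coeffXAddMul_mul_pow_le
    (hb : b (-1) = 0) (hbnn : ∀ r : ℕ, r ≤ n → 0 ≤ b r) (hmn : m ≤ n)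
    (hle : ∀ r : ℕ, r ≤ m → coeffXAddMul (-t) b r ≤ 0)
    (hge : ∀ r ∈ Ico (m + 1) (n + 1), 0 ≤ coeffXAddMul (-t) b r) (ht : 0 < t) (htR : t ≤ R) :
    ∑ r ∈ range (n + 1), |coeffXAddMul (-t) b r| * R ^ r
      ≤ 2 * b m * t ^ (m + 1) * (R / t) ^ (n + 1) := by
  rw [← sum_range_add_sum_Ico _ (by omega : m + 1 ≤ n + 1)]
  have hlow := sum_range_abs_coeffXAddMul_mul_pow_le_of_nonpos hb
    (fun r hr => hbnn r (hr.trans hmn)) hle htR (ht.le.trans htR)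
  have hhigh := sum_Ico_abs_coeffXAddMul_mul_pow_le_of_nonneg hb (hbnn n le_rfl) hmn hge ht htR
  have hpow := mul_le_mul_of_nonneg_left
    (pow_le_pow_mul_div_pow ht htR (by omega : m + 1 ≤ n + 1)) (hbnn m hmn)
  linarith [mul_assoc (b m) (t ^ (m + 1)) ((R / t) ^ (n + 1))]

end Estimate

theorem leading_mul_eq_neg_sum_of_root {n : ℕ} {a : ℤ → ℝ} (hm2 : a (-2) = 0) (hm1 : a (-1) = 0)
    (htop : a (n + 1) = 0) (han : a n ≠ 0) (t1 t2 : ℝ) {z : ℂ}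
    (hz : ∑ j ∈ range (n + 1), (a j : ℂ) * z ^ j = 0) :
    (a n : ℂ) * z ^ (n + 1) * (z + ((a (n - 1) / a n : ℝ) : ℂ) - ((t1 - t2 : ℝ) : ℂ))
      = -∑ r ∈ range (n + 1), ((coeffXAddMul (-t1) (coeffXAddMul t2 a) r : ℝ) : ℂ) * z ^ r := by
  let A : ℤ → ℂ := Complex.ofRealHom ∘ a
  let B := coeffXAddMul (t2 : ℂ) A
  have hBtop : B (n + 1 : ℕ) = A n := by simp [B, A, coeffXAddMul, htop]
  have hzB : ∑ r ∈ range (n + 2), B r * z ^ r = 0 := by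
    have h := add_mul_sum_range_pow (t2 : ℂ) z A (by simp [A, hm1]) n
    rw [show ∑ j ∈ range (n + 1), A j * z ^ j = 0 from hz, mul_zero] at h
    rw [sum_range_succ, hBtop]
    linear_combination -h
  have h := add_mul_sum_range_pow (-(t1 : ℂ)) z B (by simp [B, A, coeffXAddMul, hm1, hm2]) (n + 1)
  rw [hzB, mul_zero, sum_range_succ, hBtop] at h
  have hlast : coeffXAddMul (-(t1 : ℂ)) B (n + 1 : ℕ) = (t2 - t1) * A n + A (n - 1) := by
    simp [B, A, coeffXAddMul, htop]
    ring
  have hα : A n * ((a (n - 1) / a n : ℝ) : ℂ) = A (n - 1) := by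
    rw [Complex.ofReal_div]
    exact mul_div_cancel₀ _ (Complex.ofReal_ne_zero.2 han)
  change A n * z ^ (n + 1) * _ = -∑ r ∈ range (n + 1),
    (Complex.ofRealHom ∘ coeffXAddMul (-t1) (coeffXAddMul t2 a)) r * z ^ r
  rw [RingHom.comp_coeffXAddMul, RingHom.comp_coeffXAddMul, map_neg, Complex.ofReal_sub]
  rw [hlast] at h
  linear_combination -h + z ^ (n + 1) * hα

theorem norm_root_add_sub_le {n m : ℕ} {a : ℤ → ℝ} (hm2 : a (-2) = 0) (hm1 : a (-1) = 0)
    (htop : a (n + 1) = 0) (han : 0 < a n) (hmn : m ≤ n) {t1 t2 : ℝ} (ht1 : 0 < t1)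
    (hbnn : ∀ r : ℕ, r ≤ n → 0 ≤ coeffXAddMul t2 a r)
    (hle : ∀ r : ℕ, r ≤ m → coeffXAddMul (-t1) (coeffXAddMul t2 a) r ≤ 0)
    (hge : ∀ r ∈ Ico (m + 1) (n + 1), 0 ≤ coeffXAddMul (-t1) (coeffXAddMul t2 a) r)
    {z : ℂ} (hz : ∑ j ∈ range (n + 1), (a j : ℂ) * z ^ j = 0) (hzt : t1 ≤ ‖z‖) :
    ‖z + ((a (n - 1) / a n : ℝ) : ℂ) - ((t1 - t2 : ℝ) : ℂ)‖
      ≤ 2 * coeffXAddMul t2 a m / (a n * t1 ^ (n - m)) := by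
  set w := z + ((a (n - 1) / a n : ℝ) : ℂ) - ((t1 - t2 : ℝ) : ℂ)
  have hR : 0 < ‖z‖ := ht1.trans_le hzt
  have hnorm : a n * ‖z‖ ^ (n + 1) * ‖w‖
      ≤ ∑ r ∈ range (n + 1), |coeffXAddMul (-t1) (coeffXAddMul t2 a) r| * ‖z‖ ^ r := by
    have h := congrArg norm (leading_mul_eq_neg_sum_of_root hm2 hm1 htop han.ne' t1 t2 hz)
    rw [norm_neg, norm_mul, norm_mul, norm_pow, Complex.norm_real, Real.norm_of_nonneg han.le] at h
    rw [h]
    refine (norm_sum_le _ _).trans_eq (sum_congr rfl fun r _ => ?_)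
    rw [norm_mul, norm_pow, Complex.norm_real, Real.norm_eq_abs]
  have hest := sum_range_abs_coeffXAddMul_mul_pow_le
    (by simp [coeffXAddMul, hm1, hm2]) hbnn hmn hle hge ht1 hzt
  have hscale : t1 ^ (m + 1) * (‖z‖ / t1) ^ (n + 1) * t1 ^ (n - m) = ‖z‖ ^ (n + 1) := by
    have hpow : t1 ^ (m + 1) * t1 ^ (n - m) = t1 ^ (n + 1) := by rw [← pow_add]; congr 1; omega
    rw [div_pow, mul_right_comm, hpow]
    field_simp
  rw [le_div_iff₀ (by positivity)]
  refine le_of_mul_le_mul_left ?_ (pow_pos hR (n + 1))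
  calc ‖z‖ ^ (n + 1) * (‖w‖ * (a n * t1 ^ (n - m)))
      = a n * ‖z‖ ^ (n + 1) * ‖w‖ * t1 ^ (n - m) := by ring
    _ ≤ 2 * coeffXAddMul t2 a m * t1 ^ (m + 1) * (‖z‖ / t1) ^ (n + 1) * t1 ^ (n - m) :=
      mul_le_mul_of_nonneg_right (hnorm.trans hest) (by positivity)
    _ = ‖z‖ ^ (n + 1) * (2 * coeffXAddMul t2 a m) := by rw [← hscale]; ring

theorem norm_add_ofReal_sub_ofReal_le (z : ℂ) {x y : ℝ} (hxy : y ≤ x) :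
    ‖z + (x : ℂ) - (y : ℂ)‖ ≤ ‖z‖ + (x - y) := by
  rw [add_sub_assoc, ← Complex.ofReal_sub]
  refine (norm_add_le _ _).trans_eq ?_
  rw [Complex.norm_real, Real.norm_of_nonneg (sub_nonneg.2 hxy)]

theorem cor112_general (n k : ℕ) (a : ℤ → ℝ) (hk : k + 1 ≤ n)
    (hpos : ∀ j : ℤ, 0 ≤ j → j ≤ n → 0 < a j)
    (hm2 : a (-2) = 0) (hm1 : a (-1) = 0) (htop : a (n + 1) = 0)
    (t1 t2 : ℝ) (ht1 : t1 ≠ 0) (ht12 : t2 ≤ t1) (ht2 : 0 ≤ t2)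
    (hc1 : ∀ r : ℤ, 1 ≤ r → r ≤ k + 1 →
      0 ≤ t1 * t2 * a r + (t1 - t2) * a (r - 1) - a (r - 2))
    (hc2 : ∀ r : ℤ, k + 2 ≤ r → r ≤ n + 1 →
      t1 * t2 * a r + (t1 - t2) * a (r - 1) - a (r - 2) ≤ 0)
    (z : ℂ) (hz : ∑ j ∈ Finset.range (n + 1), (a j : ℂ) * z ^ j = 0) :
    ‖z + ((a (n - 1) / a n : ℝ) : ℂ) - ((t1 - t2 : ℝ) : ℂ)‖ ≤
      t2 + a (n - 1) / a n + (2 * t2 * a (k + 1) + 2 * a k) / (a n * t1 ^ (n - k - 1)) := by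
  have ht1 : 0 < t1 := (ht2.trans ht12).lt_of_ne' ht1
  have han : 0 < a n := hpos n (by positivity) le_rfl
  have hnn : ∀ j : ℤ, -2 ≤ j → j ≤ n → 0 ≤ a j := fun j hj hjn => by
    rcases le_or_gt 0 j with h | h
    · exact (hpos j h hjn).le
    · interval_cases j <;> simp [hm1, hm2]
  have hα : t1 - t2 ≤ a (n - 1) / a n := by
    have h := hc2 (n + 1) (by omega) le_rfl
    rw [htop, add_sub_cancel_right, show (n : ℤ) + 1 - 2 = n - 1 by ring] at h
    rw [le_div_iff₀ han]
    linarith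
  have hB : 0 ≤ (2 * t2 * a (k + 1) + 2 * a k) / (a n * t1 ^ (n - k - 1)) := by
    have := hnn k (by omega) (by omega)
    have := hnn (k + 1) (by omega) (by omega)
    positivity
  rcases le_or_gt t1 ‖z‖ with hzt | hzt
  · have hb : ∀ r : ℕ, r ≤ n → 0 ≤ coeffXAddMul t2 a r := fun r hr =>
      add_nonneg (mul_nonneg ht2 (hnn _ (by omega) (by omega))) (hnn _ (by omega) (by omega))
    have hle : ∀ r : ℕ, r ≤ k + 1 → coeffXAddMul (-t1) (coeffXAddMul t2 a) r ≤ 0 := by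
      rintro (_ | r) hr <;> rw [coeffXAddMul_neg_coeffXAddMul, neg_nonpos]
      · simpa [hm1, hm2] using mul_nonneg (mul_nonneg ht1.le ht2) (hnn 0 (by norm_num) (by omega))
      · exact hc1 _ (by omega) (by omega)
    have hge : ∀ r ∈ Ico (k + 2) (n + 1), 0 ≤ coeffXAddMul (-t1) (coeffXAddMul t2 a) r := by
      intro r hr
      obtain ⟨hkr, hrn⟩ := mem_Ico.1 hr
      rw [coeffXAddMul_neg_coeffXAddMul, neg_nonneg]
      exact hc2 _ (by omega) (by omega)
    have h := norm_root_add_sub_le hm2 hm1 htop han hk ht1 hb hle hge hz hzt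
    rw [coeffXAddMul, ← Nat.sub_sub, mul_add, ← mul_assoc] at h
    simp only [Nat.cast_add, Nat.cast_one, add_sub_cancel_right] at h
    linarith
  · linarith [norm_add_ofReal_sub_ofReal_le z hα]

/-- Corollary 1.12. -/
theorem cor112 (n k : ℕ) (a : ℤ → ℝ) (hn : 1 ≤ n) (hk : k + 1 ≤ n)
    (hpos : ∀ j : ℤ, 0 ≤ j → j ≤ n → 0 < a j)
    (hm2 : a (-2) = 0) (hm1 : a (-1) = 0) (htop : a (n + 1) = 0)
    (t1 t2 : ℝ) (ht1 : t1 ≠ 0) (ht12 : t2 ≤ t1) (ht2 : 0 ≤ t2)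
    (hc1 : ∀ r : ℤ, 1 ≤ r → r ≤ k + 1 →
      0 ≤ t1 * t2 * a r + (t1 - t2) * a (r - 1) - a (r - 2))
    (hc2 : ∀ r : ℤ, k + 2 ≤ r → r ≤ n + 1 →
      t1 * t2 * a r + (t1 - t2) * a (r - 1) - a (r - 2) ≤ 0)
    (z : ℂ) (hz : ∑ j ∈ Finset.range (n + 1), (a j : ℂ) * z ^ j = 0) :
    ‖z + ((a (n - 1) / a n : ℝ) : ℂ) - ((t1 - t2 : ℝ) : ℂ)‖ ≤
      t2 + a (n - 1) / a n + (2 * t2 * a (k + 1) + 2 * a k) / (a n * t1 ^ (n - k - 1)) :=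
  cor112_general n k a hk hpos hm2 hm1 htop t1 t2 ht1 ht12 ht2 hc1 hc2 z hz
end

section
/- Under the hypotheses of Theorem 1.7 (degree n ≥ 3, coefficients in a sector of half-angle α ≤ π/2, turning index 0 ≤ k ≤ n−3, t_1 ≥ t_2 ≥ 0, t_1 ≠ 0), the disk D_1 = { z : |z + a_{n-1}/a_n − (t_1 − t_2)| ≤ (t_2 + |a_{n-1}/a_n|)(sin α − cos α) + (2 t_2|a_{k+1}| + 2|a_k|) cos α/(|a_n| t_1^{n-k-1}) + (2 sin α/|a_n|) Σ_{ν=0}^{n-2} |a_ν|/t_1^{n-ν-1} } is contained in the disk D_2 = { z : |z| ≤ t_1[ ((2|a_k| + 2 t_2|a_{k+1}|)/(t_1^{n-k}|a_n|) − 1) cos α + sin α ] + (2 sin α/|a_n|) Σ_{j=0}^{n-1} |a_j|/t_1^{n-j-1} }. -/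
/-!
Write `q = aₙ₋₁ / aₙ` and `s = t₁ - t₂`; the centre of `D₁` is `s - q`, so `|z| ≤ |z - (s - q)| + |s - q|`.
The sign condition at `r = n + 1` says `s ≤ |q|`, and the sector condition puts `arg q` within `2α`
of `0`, so `Re q ≥ |q| cos 2α`. Together these give `|s - q| ≤ s (sin α - cos α) + |q| (sin α + cos α)`,
and adding this to the radius of `D₁` yields exactly the radius of `D₂`: the surplus `2 |q| sin α`
is the `j = n - 1` term of its sum.
-/

open Real Complex

lemma Complex.re_div_eq_norm_div_mul_cos_arg_sub {w v : ℂ} (hw : w ≠ 0) (hv : v ≠ 0) :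
    (w / v).re = ‖w / v‖ * Real.cos (arg w - arg v) := by
  rw [← norm_mul_cos_arg, ← Real.Angle.cos_coe, arg_div_coe_angle hw hv, ← Real.Angle.coe_sub,
    Real.Angle.cos_coe]

lemma Complex.norm_div_mul_cos_two_mul_le_re_div {w v : ℂ} {α β : ℝ} (hv : v ≠ 0)
    (hα : α ≤ π / 2) (hw_arg : |arg w - β| ≤ α) (hv_arg : |arg v - β| ≤ α) :
    ‖w / v‖ * Real.cos (2 * α) ≤ (w / v).re := by
  rcases eq_or_ne w 0 with rfl | hw
  · simp
  have harg : |arg w - arg v| ≤ 2 * α := by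
    calc |arg w - arg v| = |(arg w - β) - (arg v - β)| := by ring_nf
      _ ≤ |arg w - β| + |arg v - β| := abs_sub _ _
      _ ≤ 2 * α := by linarith
  rw [re_div_eq_norm_div_mul_cos_arg_sub hw hv, ← Real.cos_abs (arg w - arg v)]
  gcongr
  exact Real.cos_le_cos_of_nonneg_of_le_pi (abs_nonneg _) (by linarith) harg

lemma Complex.norm_ofReal_sub_le {q : ℂ} {s α : ℝ} (hs : 0 ≤ s) (hsq : s ≤ ‖q‖)
    (hsin : 0 ≤ Real.sin α) (hcos : 0 ≤ Real.cos α) (hre : ‖q‖ * Real.cos (2 * α) ≤ q.re) :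
    ‖(s : ℂ) - q‖ ≤ s * (Real.sin α - Real.cos α) + ‖q‖ * (Real.sin α + Real.cos α) := by
  have hnorm_sq : ‖(s : ℂ) - q‖ ^ 2 = s ^ 2 - 2 * s * q.re + ‖q‖ ^ 2 := by
    simp only [Complex.sq_norm, normSq_apply, sub_re, sub_im, ofReal_re, ofReal_im]
    ring
  rw [Real.cos_two_mul'] at hre
  -- the square of the bound exceeds `s² - 2 s ‖q‖ cos 2α + ‖q‖²` by `sin 2α (‖q‖² - s²) ≥ 0`
  rw [← sq_le_sq₀ (norm_nonneg _) (by nlinarith), hnorm_sq]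
  linear_combination 2 * mul_nonneg (mul_nonneg hsin hcos)
      (sub_nonneg.2 (mul_self_le_mul_self hs hsq)) + 2 * mul_le_mul_of_nonneg_left hre hs
    - (‖q‖ ^ 2 + s ^ 2) * Real.sin_sq_add_cos_sq α

theorem remark18_general (n k : ℕ) (a : ℤ → ℂ) (hk : k + 3 ≤ n)
    (han : a n ≠ 0)
    (α β : ℝ) (hα : α ≤ Real.pi / 2)
    (harg : ∀ j : ℤ, 0 ≤ j → j ≤ n → |Complex.arg (a j) - β| ≤ α)
    (htop : a (n + 1) = 0)
    (t1 t2 : ℝ) (ht1 : t1 ≠ 0) (ht12 : t2 ≤ t1)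
    (hc2 : ∀ r : ℤ, k + 2 ≤ r → r ≤ n + 1 →
      t1 * t2 * ‖a r‖ + (t1 - t2) * ‖a (r - 1)‖ -
        ‖a (r - 2)‖ ≤ 0) :
    {z : ℂ | ‖z + a (n - 1) / a n - ((t1 - t2 : ℝ) : ℂ)‖ ≤
        (t2 + ‖a (n - 1) / a n‖) * (Real.sin α - Real.cos α)
        + (2 * t2 * ‖a (k + 1)‖ + 2 * ‖a k‖) * Real.cos α /
            (‖a n‖ * t1 ^ (n - k - 1))
        + (2 * Real.sin α / ‖a n‖) *
            ∑ ν ∈ Finset.range (n - 1), ‖a ν‖ / t1 ^ (n - ν - 1)} ⊆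
    {z : ℂ | ‖z‖ ≤
        t1 * (((2 * ‖a k‖ + 2 * t2 * ‖a (k + 1)‖) /
            (t1 ^ (n - k) * ‖a n‖) - 1) * Real.cos α + Real.sin α)
        + (2 * Real.sin α / ‖a n‖) *
            ∑ j ∈ Finset.range n, ‖a j‖ / t1 ^ (n - j - 1)} := by
  obtain ⟨m, rfl⟩ : ∃ m, n = m + 1 := ⟨n - 1, by omega⟩
  push_cast at han harg htop hc2 ⊢
  simp only [add_sub_cancel_right, Finset.sum_range_succ]
  set q := a m / a (m + 1)
  have hα0 : 0 ≤ α := (abs_nonneg _).trans (harg 0 le_rfl (by positivity))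
  have hsin : 0 ≤ Real.sin α := Real.sin_nonneg_of_nonneg_of_le_pi hα0 (by linarith [Real.pi_pos])
  have hcos : 0 ≤ Real.cos α := Real.cos_nonneg_of_mem_Icc ⟨by linarith [Real.pi_pos], hα⟩
  have hs_le : t1 - t2 ≤ ‖q‖ := by
    have h := hc2 (m + 2) (by omega) (by omega)
    rw [show ((m : ℤ) + 2) = m + 1 + 1 by ring, htop, add_sub_cancel_right,
      show (m : ℤ) + 1 + 1 - 2 = m by ring] at h
    rw [norm_div, le_div_iff₀ (norm_pos_iff.mpr han)]
    simpa using h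
  have hre : ‖q‖ * Real.cos (2 * α) ≤ q.re :=
    norm_div_mul_cos_two_mul_le_re_div han hα (harg m (by positivity) (by omega))
      (harg (m + 1) (by positivity) le_rfl)
  have hshift := norm_ofReal_sub_le (sub_nonneg.2 ht12) hs_le hsin hcos hre
  intro z hz
  simp only [Set.mem_ofPred_eq] at hz ⊢
  rw [show m + 1 - m - 1 = 0 by omega, pow_zero, div_one,
    show m + 1 - k = m + 1 - k - 1 + 1 by omega, pow_succ]
  push_cast at hshift
  calc ‖z‖ ≤ ‖z + q - (t1 - t2)‖ + ‖(t1 - t2) - q‖ := by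
        simpa using norm_add_le (z + q - (t1 - t2)) ((t1 - t2) - q)
    _ ≤ _ := add_le_add hz hshift
    _ = _ := by simp only [q, norm_div]; field_simp; ring

/-- Remark 1.8: the disk of Theorem 1.7 is contained in the disk of Theorem 1.5. -/
theorem remark18 (n k : ℕ) (a : ℤ → ℂ) (hn : 3 ≤ n) (hk : k + 3 ≤ n)
    (han : a n ≠ 0)
    (α β : ℝ) (hα : α ≤ Real.pi / 2)
    (harg : ∀ j : ℤ, 0 ≤ j → j ≤ n → |Complex.arg (a j) - β| ≤ α)
    (hm2 : a (-2) = 0) (hm1 : a (-1) = 0) (htop : a (n + 1) = 0)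
    (t1 t2 : ℝ) (ht1 : t1 ≠ 0) (ht12 : t2 ≤ t1) (ht2 : 0 ≤ t2)
    (hc1 : ∀ r : ℤ, 1 ≤ r → r ≤ k + 1 →
      0 ≤ t1 * t2 * ‖a r‖ + (t1 - t2) * ‖a (r - 1)‖ -
        ‖a (r - 2)‖)
    (hc2 : ∀ r : ℤ, k + 2 ≤ r → r ≤ n + 1 →
      t1 * t2 * ‖a r‖ + (t1 - t2) * ‖a (r - 1)‖ -
        ‖a (r - 2)‖ ≤ 0) :
    {z : ℂ | ‖z + a (n - 1) / a n - ((t1 - t2 : ℝ) : ℂ)‖ ≤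
        (t2 + ‖a (n - 1) / a n‖) * (Real.sin α - Real.cos α)
        + (2 * t2 * ‖a (k + 1)‖ + 2 * ‖a k‖) * Real.cos α /
            (‖a n‖ * t1 ^ (n - k - 1))
        + (2 * Real.sin α / ‖a n‖) *
            ∑ ν ∈ Finset.range (n - 1), ‖a ν‖ / t1 ^ (n - ν - 1)} ⊆
    {z : ℂ | ‖z‖ ≤
        t1 * (((2 * ‖a k‖ + 2 * t2 * ‖a (k + 1)‖) /
            (t1 ^ (n - k) * ‖a n‖) - 1) * Real.cos α + Real.sin α)
        + (2 * Real.sin α / ‖a n‖) *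
            ∑ j ∈ Finset.range n, ‖a j‖ / t1 ^ (n - j - 1)} :=
  remark18_general n k a hk han α β hα harg htop t1 t2 ht1 ht12 hc2
end

section
/- Under the hypotheses of Theorem 1.10 (a_j = α_j + i β_j, α_n > 0, t_1 > 0, t_1 ≥ t_2 ≥ 0, turning indices k, m with 0 ≤ k, m ≤ n−1, and the stated sign conditions on real and imaginary parts), the disk { z : |z + (α_{n-1} − (t_1 − t_2)α_n)/a_n| ≤ 2(α_{k+1} t_2 + α_k) t_1^{k+1}/(|a_n| t_1^n) + 2(β_{m+1} t_2 + β_m) t_1^{m+1}/(|a_n| t_1^n) − (t_2 α_n + t_1 β_n + α_{n-1})/|a_n| } is contained in the disk { z : |z| ≤ (t_1/|a_n|)[ 2 t_1^{k-n}(α_k + t_2 α_{k+1}) + 2 t_1^{m-n}(β_m + t_2 β_{m+1}) − (α_n + β_n) ] }. -/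
/-! The first disk has centre `-N / aₙ` with `N = α_{n-1} - (t₁ - t₂) αₙ`, and the sign condition at
`r = n + 1` (where `a_{n+1} = 0`) says exactly that `N ≥ 0`. The radius of the second disk is the
radius of the first plus `N / |aₙ| = |N / aₙ|`, so the containment is the triangle inequality. -/

theorem setOf_norm_add_le_subset_setOf_norm_le {E : Type*} [SeminormedAddCommGroup E] (w : E)
    {r s : ℝ} (h : r + ‖w‖ ≤ s) : {z : E | ‖z + w‖ ≤ r} ⊆ {z : E | ‖z‖ ≤ s} :=
  fun z (hz : ‖z + w‖ ≤ r) => (norm_le_add_norm_add z w).trans (by linarith)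

theorem radius_eq_radius_add {t s A : ℝ} (ht : t ≠ 0) (hA : A ≠ 0) (n k m : ℕ)
    (x₀ x₁ y₀ y₁ α β α' : ℝ) :
    (t / A) * (2 * t ^ ((k : ℤ) - n) * (x₀ + s * x₁) + 2 * t ^ ((m : ℤ) - n) * (y₀ + s * y₁)
        - (α + β)) =
      2 * (x₁ * s + x₀) * t ^ (k + 1) / (A * t ^ n) + 2 * (y₁ * s + y₀) * t ^ (m + 1) / (A * t ^ n)
        - (s * α + t * β + α') / A + (α' - (t - s) * α) / A := by
  simp only [zpow_sub₀ ht, zpow_natCast]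
  field_simp
  ring

theorem remark111_general (n k m : ℕ) (a : ℤ → ℂ) (hk : k + 1 ≤ n)
    (han : a n ≠ 0)
    (htop : a (n + 1) = 0)
    (t1 t2 : ℝ) (ht1 : 0 < t1)
    (hr2 : ∀ r : ℤ, k + 2 ≤ r → r ≤ n + 1 →
      t1 * t2 * (a r).re + (t1 - t2) * (a (r - 1)).re - (a (r - 2)).re ≤ 0) :
    {z : ℂ | ‖z + (((a (n - 1)).re - (t1 - t2) * (a n).re : ℝ) : ℂ) / a n‖ ≤
        2 * ((a (k + 1)).re * t2 + (a k).re) * t1 ^ (k + 1) / (‖a n‖ * t1 ^ n)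
        + 2 * ((a (m + 1)).im * t2 + (a m).im) * t1 ^ (m + 1) / (‖a n‖ * t1 ^ n)
        - (t2 * (a n).re + t1 * (a n).im + (a (n - 1)).re) / ‖a n‖} ⊆
    {z : ℂ | ‖z‖ ≤
        (t1 / ‖a n‖) *
          (2 * t1 ^ ((k : ℤ) - n) * ((a k).re + t2 * (a (k + 1)).re)
           + 2 * t1 ^ ((m : ℤ) - n) * ((a m).im + t2 * (a (m + 1)).im)
           - ((a n).re + (a n).im))} := by
  have hN : 0 ≤ (a (n - 1)).re - (t1 - t2) * (a n).re := by
    have h := hr2 (n + 1) (by omega) le_rfl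
    rw [htop, add_sub_cancel_right, show (n : ℤ) + 1 - 2 = n - 1 by ring] at h
    simp only [Complex.zero_re, mul_zero, zero_add] at h
    linarith
  apply setOf_norm_add_le_subset_setOf_norm_le
  rw [norm_div, Complex.norm_of_nonneg hN,
    radius_eq_radius_add ht1.ne' (norm_ne_zero_iff.mpr han)]

/-- Remark 1.11: the disk of Theorem 1.10 is contained in the disk of Theorem 1.6. -/
theorem remark111 (n k m : ℕ) (a : ℤ → ℂ) (hn : 1 ≤ n) (hk : k + 1 ≤ n) (hm : m + 1 ≤ n)
    (han : a n ≠ 0)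
    (hm2 : a (-2) = 0) (hm1 : a (-1) = 0) (htop : a (n + 1) = 0)
    (hαn : 0 < (a n).re)
    (t1 t2 : ℝ) (ht1 : 0 < t1) (ht12 : t2 ≤ t1) (ht2 : 0 ≤ t2)
    (hr1 : ∀ r : ℤ, 1 ≤ r → r ≤ k + 1 →
      0 ≤ t1 * t2 * (a r).re + (t1 - t2) * (a (r - 1)).re - (a (r - 2)).re)
    (hr2 : ∀ r : ℤ, k + 2 ≤ r → r ≤ n + 1 →
      t1 * t2 * (a r).re + (t1 - t2) * (a (r - 1)).re - (a (r - 2)).re ≤ 0)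
    (hi1 : ∀ r : ℤ, 1 ≤ r → r ≤ m + 1 →
      0 ≤ t1 * t2 * (a r).im + (t1 - t2) * (a (r - 1)).im - (a (r - 2)).im)
    (hi2 : ∀ r : ℤ, m + 2 ≤ r → r ≤ n + 1 →
      t1 * t2 * (a r).im + (t1 - t2) * (a (r - 1)).im - (a (r - 2)).im ≤ 0) :
    {z : ℂ | ‖z + (((a (n - 1)).re - (t1 - t2) * (a n).re : ℝ) : ℂ) / a n‖ ≤
        2 * ((a (k + 1)).re * t2 + (a k).re) * t1 ^ (k + 1) / (‖a n‖ * t1 ^ n)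
        + 2 * ((a (m + 1)).im * t2 + (a m).im) * t1 ^ (m + 1) / (‖a n‖ * t1 ^ n)
        - (t2 * (a n).re + t1 * (a n).im + (a (n - 1)).re) / ‖a n‖} ⊆
    {z : ℂ | ‖z‖ ≤
        (t1 / ‖a n‖) *
          (2 * t1 ^ ((k : ℤ) - n) * ((a k).re + t2 * (a (k + 1)).re)
           + 2 * t1 ^ ((m : ℤ) - n) * ((a m).im + t2 * (a (m + 1)).im)
           - ((a n).re + (a n).im))} :=
  remark111_general n k m a hk han htop t1 t2 ht1 hr2
end

section
/- Let P(z) = Σ_{j=0}^n a_j z^j be a polynomial of degree n with complex coefficients such that |arg a_j − β| ≤ α ≤ π/2 for all j, for some real β. Suppose t_1 > t_2 ≥ 0 and 0 ≤ k ≤ n satisfy t_1 t_2|a_r| + (t_1 − t_2)|a_{r-1}| − |a_{r-2}| ≥ 0 for r = 1, ..., k+1 and ≤ 0 for r = k+2, ..., n+1 (a_{-1} = a_{n+1} = 0). Then every zero z of P satisfies |z| ≤ t_1[ ((2|a_k| + 2 t_2|a_{k+1}|)/(t_1^{n-k}|a_n|) − 1) cos α + sin α ] + (2 sin α /|a_n|)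 Σ_{j=0}^{n-1} |a_j| / t_1^{n-j-1}. -/
/-!
Multiplying `P` by `(t₁ - z) (t₂ + z)` gives the coefficients
`C r = t₁ t₂ a r + (t₁ - t₂) a (r - 1) - a (r - 2)`, so at a zero `z` of `P` we have
`a n z ^ (n + 2) = ∑_{r ≤ n + 1} C r z ^ r`, and for `‖z‖ > t₁` this gives
`‖a n‖ ‖z‖ t₁ ^ (n + 1) ≤ ∑ ‖C r‖ t₁ ^ r`.
Since all `a j` lie in one sector of half-angle `α`, the Govil–Rahman inequality
`‖u - v‖ ≤ |‖u‖ - ‖v‖| cos α + (‖u‖ + ‖v‖) sin α` bounds `‖C r‖` by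
`|d r| cos α + (d r + 2 ‖a (r - 2)‖) sin α`, where `d r` is `C r` with every `a j` replaced by
`‖a j‖`. At `z = t₁` the products `d r t₁ ^ r` telescope, and the sign pattern of `d r` about
`k + 1` evaluates `∑ |d r| t₁ ^ r` in closed form; the same sign pattern gives
`t₁ ^ (n - k) ‖a n‖ ≤ t₂ ‖a (k + 1)‖ + ‖a k‖`, which makes the bound at least `t₁` and so
covers the case `‖z‖ ≤ t₁`.
-/

open Complex Finset

/-- Any argument `θ` of `w` may witness membership, so `0` lies in every nonempty sector. -/
def InSector (β α : ℝ) (w : ℂ) : Prop :=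
  ∃ θ : ℝ, |θ - β| ≤ α ∧ w = ‖w‖ * exp (θ * I)

lemma inSector_of_abs_arg_sub_le {β α : ℝ} {w : ℂ} (h : |arg w - β| ≤ α) : InSector β α w :=
  ⟨arg w, h, (norm_mul_exp_arg_mul_I w).symm⟩

lemma inSector_zero {β α : ℝ} (hα : 0 ≤ α) : InSector β α 0 :=
  ⟨β, by simpa using hα, by simp⟩

lemma norm_ofReal_mul_exp_sub_le {x y θ φ α β : ℝ} (hx : 0 ≤ x) (hy : 0 ≤ y)
    (hθ : |θ - β| ≤ α) (hφ : |φ - β| ≤ α) (hα : α ≤ Real.pi / 2) :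
    ‖(x : ℂ) * exp (θ * I) - y * exp (φ * I)‖ ≤ |x - y| * Real.cos α + (x + y) * Real.sin α := by
  have hα0 : 0 ≤ α := (abs_nonneg _).trans hθ
  have hc : 0 ≤ Real.cos α := Real.cos_nonneg_of_mem_Icc ⟨by linarith [Real.pi_pos], hα⟩
  have hs : 0 ≤ Real.sin α := Real.sin_nonneg_of_nonneg_of_le_pi hα0 (by linarith [Real.pi_pos])
  have hcs := Real.sin_sq_add_cos_sq α
  have hangle : Real.cos (2 * α) ≤ Real.cos (θ - φ) := by
    rw [← Real.cos_abs (θ - φ)]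
    refine Real.cos_le_cos_of_nonneg_of_le_pi (abs_nonneg _) (by linarith) ?_
    calc |θ - φ| = |(θ - β) - (φ - β)| := by ring_nf
      _ ≤ |θ - β| + |φ - β| := abs_sub _ _
      _ ≤ 2 * α := by linarith
  have hnorm : ‖(x : ℂ) * exp (θ * I) - y * exp (φ * I)‖ ^ 2
      = x ^ 2 + y ^ 2 - 2 * x * y * Real.cos (θ - φ) := by
    rw [Complex.sq_norm, normSq_apply]
    simp only [sub_re, sub_im, re_ofReal_mul, im_ofReal_mul, exp_ofReal_mul_I_re,
      exp_ofReal_mul_I_im, Real.cos_sub]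
    linear_combination x ^ 2 * Real.sin_sq_add_cos_sq θ + y ^ 2 * Real.sin_sq_add_cos_sq φ
  have hbound : (|x - y| * Real.cos α + (x + y) * Real.sin α) ^ 2
      = x ^ 2 + y ^ 2 - 2 * x * y * Real.cos (2 * α)
        + 2 * (|x - y| * (x + y)) * (Real.cos α * Real.sin α) := by
    rw [Real.cos_two_mul]
    linear_combination (Real.cos α ^ 2) * sq_abs (x - y) + (x ^ 2 + y ^ 2 + 2 * x * y) * hcs
  refine (pow_le_pow_iff_left₀ (norm_nonneg _) (by positivity) two_ne_zero).mp ?_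
  rw [hnorm, hbound]
  have := mul_le_mul_of_nonneg_left hangle (by positivity : 0 ≤ 2 * x * y)
  nlinarith [mul_nonneg (mul_nonneg (abs_nonneg (x - y)) (add_nonneg hx hy)) (mul_nonneg hc hs)]

/-- The Govil–Rahman inequality. -/
lemma InSector.norm_sub_le {β α : ℝ} {u v : ℂ} (hu : InSector β α u) (hv : InSector β α v)
    (hα : α ≤ Real.pi / 2) :
    ‖u - v‖ ≤ |‖u‖ - ‖v‖| * Real.cos α + (‖u‖ + ‖v‖) * Real.sin α := by
  obtain ⟨θ, hθ, hu'⟩ := hu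
  obtain ⟨φ, hφ, hv'⟩ := hv
  calc ‖u - v‖ = ‖(‖u‖ : ℂ) * exp (θ * I) - ‖v‖ * exp (φ * I)‖ := by rw [← hu', ← hv']
    _ ≤ _ := norm_ofReal_mul_exp_sub_le (norm_nonneg u) (norm_nonneg v) hθ hφ hα

lemma InSector.norm_ofReal_mul_sub_le {β α P : ℝ} {w m : ℂ} (hw : InSector β α w)
    (hm : InSector β α m) (hP : 0 ≤ P) (hα : α ≤ Real.pi / 2) :
    ‖(P : ℂ) * w - ‖w‖ * m‖ ≤ ‖w‖ * (|P - ‖m‖| * Real.cos α + (P + ‖m‖) * Real.sin α) := by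
  obtain ⟨θ, hθ, hw'⟩ := hw
  have hu : InSector β α (P * exp (θ * I)) := ⟨θ, hθ, by simp [Real.norm_of_nonneg hP]⟩
  have hnorm : ‖(P : ℂ) * exp (θ * I)‖ = P := by simp [Real.norm_of_nonneg hP]
  calc ‖(P : ℂ) * w - ‖w‖ * m‖ = ‖(‖w‖ : ℂ) * (P * exp (θ * I) - m)‖ := by
        congr 1; nth_rewrite 1 [hw']; ring
    _ = ‖w‖ * ‖P * exp (θ * I) - m‖ := by rw [norm_mul, norm_real, norm_norm]
    _ ≤ _ := by
      gcongr
      simpa only [hnorm] using hu.norm_sub_le hm hα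

/-- With `P = ∑ c i * ‖w i‖`, the combination `∑ c i * w i` is an average of the points
`P * w i / ‖w i‖` of the sector, each of norm `P`, so the Govil–Rahman bound passes to it. -/
lemma norm_sum_mul_sub_le {ι : Type*} (s : Finset ι) {β α : ℝ} {c : ι → ℝ} {w : ι → ℂ} {m : ℂ}
    (hc : ∀ i ∈ s, 0 ≤ c i) (hw : ∀ i ∈ s, InSector β α (w i)) (hm : InSector β α m)
    (hα : α ≤ Real.pi / 2) :
    ‖∑ i ∈ s, (c i : ℂ) * w i - m‖ ≤
      |∑ i ∈ s, c i * ‖w i‖ - ‖m‖| * Real.cos α + (∑ i ∈ s, c i * ‖w i‖ + ‖m‖) * Real.sin α := by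
  set P := ∑ i ∈ s, c i * ‖w i‖ with hPdef
  set B := |P - ‖m‖| * Real.cos α + (P + ‖m‖) * Real.sin α
  have hterm : ∀ i ∈ s, 0 ≤ c i * ‖w i‖ := fun i hi => mul_nonneg (hc i hi) (norm_nonneg _)
  have hP0 : 0 ≤ P := sum_nonneg hterm
  rcases hP0.eq_or_lt with hP | hP
  · have hsum : ∑ i ∈ s, (c i : ℂ) * w i = 0 := by
      refine sum_eq_zero fun i hi => norm_eq_zero.mp ?_
      rw [norm_mul, norm_real, Real.norm_of_nonneg (hc i hi)]
      exact (sum_eq_zero_iff_of_nonneg hterm).mp hP.symm i hi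
    have h0 : InSector β α 0 := by
      obtain ⟨θ, hθ, -⟩ := hm
      exact inSector_zero ((abs_nonneg _).trans hθ)
    simpa [hsum, B, ← hP] using h0.norm_sub_le hm hα
  · refine le_of_mul_le_mul_left ?_ hP
    have hPc : (P : ℂ) = ∑ i ∈ s, (c i : ℂ) * ‖w i‖ := by push_cast [hPdef]; rfl
    calc P * ‖∑ i ∈ s, (c i : ℂ) * w i - m‖ = ‖(P : ℂ) * (∑ i ∈ s, (c i : ℂ) * w i - m)‖ := by
          rw [norm_mul, norm_real, Real.norm_of_nonneg hP.le]
      _ = ‖∑ i ∈ s, (c i : ℂ) * ((P : ℂ) * w i - ‖w i‖ * m)‖ := by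
          congr 1
          rw [mul_sub, Finset.mul_sum]
          nth_rewrite 2 [hPc]
          rw [Finset.sum_mul, ← sum_sub_distrib]
          exact sum_congr rfl fun i _ => by ring
      _ ≤ ∑ i ∈ s, c i * (‖w i‖ * B) := by
          refine (norm_sum_le _ _).trans (sum_le_sum fun i hi => ?_)
          rw [norm_mul, norm_real, Real.norm_of_nonneg (hc i hi)]
          exact mul_le_mul_of_nonneg_left ((hw i hi).norm_ofReal_mul_sub_le hm hP.le hα) (hc i hi)
      _ = P * B := by simp only [P, sum_mul, mul_assoc]

section QuadMulCoeff

variable {R : Type*} [CommRing R]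

/-- The coefficient of `x ^ r` in `(t₁ - x) * (t₂ + x) * ∑ j, a j * x ^ j`. -/
def quadMulCoeff (t₁ t₂ : R) (a : ℤ → R) (r : ℤ) : R :=
  t₁ * t₂ * a r + (t₁ - t₂) * a (r - 1) - a (r - 2)

lemma sum_range_add_mul_pow_sub (a : ℤ → R) (x : R) (m N : ℕ)
    (ha : ∀ i < m, a ((i : ℤ) - m) = 0) :
    ∑ r ∈ range (m + N), a (r - m) * x ^ r = x ^ m * ∑ r ∈ range N, a r * x ^ r := by
  rw [sum_range_add, sum_eq_zero fun i hi => by rw [ha i (mem_range.1 hi), zero_mul], zero_add,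
    mul_sum]
  refine sum_congr rfl fun r _ => ?_
  push_cast
  rw [add_sub_cancel_left, pow_add]
  ring

lemma sum_range_mul_pow_sub_two {a : ℤ → R} (x : R) (n : ℕ) (h₁ : a (-1) = 0)
    (h₂ : a (-2) = 0) :
    ∑ r ∈ range (n + 2), a (r - 2) * x ^ r = x ^ 2 * ∑ j ∈ range n, a j * x ^ j := by
  refine add_comm 2 n ▸ sum_range_add_mul_pow_sub a x 2 n fun i hi => ?_
  interval_cases i <;> simpa

lemma sum_range_quadMulCoeff_mul_pow (t₁ t₂ x : R) {a : ℤ → R} {n : ℕ} (h₁ : a (-1) = 0)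
    (h₂ : a (-2) = 0) (hn : a (n + 1) = 0) :
    ∑ r ∈ range (n + 2), quadMulCoeff t₁ t₂ a r * x ^ r =
      (t₁ - x) * (t₂ + x) * ∑ j ∈ range (n + 1), a j * x ^ j + a n * x ^ (n + 2) := by
  have e₀ : ∑ r ∈ range (n + 2), a r * x ^ r = ∑ j ∈ range (n + 1), a j * x ^ j := by
    rw [sum_range_succ]; push_cast; rw [hn, zero_mul, add_zero]
  have e₁ : ∑ r ∈ range (n + 2), a (r - 1) * x ^ r = x * ∑ j ∈ range (n + 1), a j * x ^ j := by
    simpa [add_comm 1 (n + 1), h₁] using sum_range_add_mul_pow_sub a x 1 (n + 1)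
  simp only [quadMulCoeff, add_mul, sub_mul, sum_add_distrib, sum_sub_distrib, mul_assoc,
    ← mul_sum, e₀, e₁, sum_range_mul_pow_sub_two x n h₁ h₂]
  rw [sum_range_succ]
  ring

lemma sum_range_quadMulCoeff_mul_pow_self (t₁ t₂ : R) {a : ℤ → R} (h₁ : a (-1) = 0)
    (h₂ : a (-2) = 0) (N : ℕ) :
    ∑ r ∈ range N, quadMulCoeff t₁ t₂ a r * t₁ ^ r = t₁ ^ N * (t₂ * a (N - 1) + a (N - 2)) := by
  refine sum_range_induction _ (fun N : ℕ => t₁ ^ N * (t₂ * a ((N : ℤ) - 1) + a ((N : ℤ) - 2)))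
    (by simp [h₁, h₂]) N fun r _ => ?_
  push_cast
  rw [add_sub_cancel_right, show (r : ℤ) + 1 - 2 = r - 1 by ring, quadMulCoeff]
  ring

lemma sum_range_quadMulCoeff_mul_pow_self_add_two (t₁ t₂ : R) {a : ℤ → R} (h₁ : a (-1) = 0)
    (h₂ : a (-2) = 0) (k : ℕ) :
    ∑ r ∈ range (k + 2), quadMulCoeff t₁ t₂ a r * t₁ ^ r = t₁ ^ (k + 2) * (t₂ * a (k + 1) + a k) := by
  rw [sum_range_quadMulCoeff_mul_pow_self t₁ t₂ h₁ h₂]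
  push_cast
  rw [show (k : ℤ) + 2 - 1 = k + 1 by ring, show (k : ℤ) + 2 - 2 = k by ring]

lemma sum_range_quadMulCoeff_mul_pow_self_of_eq_zero (t₁ t₂ : R) {a : ℤ → R} {n : ℕ}
    (h₁ : a (-1) = 0) (h₂ : a (-2) = 0) (hn : a (n + 1) = 0) :
    ∑ r ∈ range (n + 2), quadMulCoeff t₁ t₂ a r * t₁ ^ r = t₁ ^ (n + 2) * a n := by
  rw [sum_range_quadMulCoeff_mul_pow_self_add_two t₁ t₂ h₁ h₂, hn, mul_zero, zero_add]

lemma sum_range_quadMulCoeff_add_mul_pow (t₁ t₂ : R) {b : ℤ → R} {n : ℕ} (h₁ : b (-1) = 0)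
    (h₂ : b (-2) = 0) (hn : b (n + 1) = 0) :
    ∑ r ∈ range (n + 2), (quadMulCoeff t₁ t₂ b r + 2 * b (r - 2)) * t₁ ^ r =
      t₁ ^ (n + 2) * b n + 2 * t₁ ^ 2 * ∑ j ∈ range n, b j * t₁ ^ j := by
  simp only [add_mul, sum_add_distrib, mul_assoc, ← mul_sum,
    sum_range_quadMulCoeff_mul_pow_self_of_eq_zero t₁ t₂ h₁ h₂ hn, sum_range_mul_pow_sub_two _ n h₁ h₂]

end QuadMulCoeff

lemma sum_range_abs_eq_two_mul_sub {α : Type*} [Ring α] [LinearOrder α] [IsOrderedRing α]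
    (u : ℕ → α) {K N : ℕ} (hKN : K ≤ N) (hpos : ∀ r < K, 0 ≤ u r)
    (hneg : ∀ r, K ≤ r → r < N → u r ≤ 0) :
    ∑ r ∈ range N, |u r| = 2 * ∑ r ∈ range K, u r - ∑ r ∈ range N, u r := by
  have h₁ : ∑ r ∈ range K, |u r| = ∑ r ∈ range K, u r :=
    sum_congr rfl fun r hr => abs_of_nonneg (hpos r (mem_range.1 hr))
  have h₂ : ∑ r ∈ Ico K N, |u r| = -∑ r ∈ Ico K N, u r := by
    rw [← sum_neg_distrib]
    exact sum_congr rfl fun r hr => abs_of_nonpos (hneg r (mem_Ico.1 hr).1 (mem_Ico.1 hr).2)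
  rw [← sum_range_add_sum_Ico _ hKN, ← sum_range_add_sum_Ico _ hKN, h₁, h₂, two_mul]
  abel

lemma sum_range_abs_quadMulCoeff_mul_pow {t₁ t₂ : ℝ} {b : ℤ → ℝ} {n k : ℕ} (hk : k ≤ n)
    (ht₁ : 0 ≤ t₁) (h₁ : b (-1) = 0) (h₂ : b (-2) = 0) (hn : b (n + 1) = 0)
    (hpos : ∀ r : ℕ, r < k + 2 → 0 ≤ quadMulCoeff t₁ t₂ b r)
    (hneg : ∀ r : ℕ, k + 2 ≤ r → r < n + 2 → quadMulCoeff t₁ t₂ b r ≤ 0) :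
    ∑ r ∈ range (n + 2), |quadMulCoeff t₁ t₂ b r| * t₁ ^ r =
      2 * (t₁ ^ (k + 2) * (t₂ * b (k + 1) + b k)) - t₁ ^ (n + 2) * b n := by
  have hsign := sum_range_abs_eq_two_mul_sub (fun r => quadMulCoeff t₁ t₂ b r * t₁ ^ r)
    (by omega : k + 2 ≤ n + 2) (fun r hr => mul_nonneg (hpos r hr) (by positivity))
    (fun r h₁ h₂ => mul_nonpos_of_nonpos_of_nonneg (hneg r h₁ h₂) (by positivity))
  simp only [abs_mul, abs_pow, abs_of_nonneg ht₁] at hsign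
  rw [hsign, sum_range_quadMulCoeff_mul_pow_self_of_eq_zero t₁ t₂ h₁ h₂ hn,
    sum_range_quadMulCoeff_mul_pow_self_add_two t₁ t₂ h₁ h₂]

lemma pow_mul_le_of_quadMulCoeff_nonpos {t₁ t₂ : ℝ} {b : ℤ → ℝ} {n k : ℕ} (hk : k ≤ n)
    (ht₁ : 0 ≤ t₁) (h₁ : b (-1) = 0) (h₂ : b (-2) = 0) (hn : b (n + 1) = 0)
    (hneg : ∀ r : ℕ, k + 2 ≤ r → r < n + 2 → quadMulCoeff t₁ t₂ b r ≤ 0) :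
    t₁ ^ (n + 2) * b n ≤ t₁ ^ (k + 2) * (t₂ * b (k + 1) + b k) := by
  have h : ∑ r ∈ Ico (k + 2) (n + 2), quadMulCoeff t₁ t₂ b r * t₁ ^ r ≤ 0 :=
    sum_nonpos fun r hr =>
      mul_nonpos_of_nonpos_of_nonneg (hneg r (mem_Ico.1 hr).1 (mem_Ico.1 hr).2) (by positivity)
  rw [sum_Ico_eq_sub _ (by omega), sum_range_quadMulCoeff_mul_pow_self_of_eq_zero t₁ t₂ h₁ h₂ hn,
    sum_range_quadMulCoeff_mul_pow_self_add_two t₁ t₂ h₁ h₂] at h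
  linarith

lemma norm_quadMulCoeff_le {β α t₁ t₂ : ℝ} {a : ℤ → ℂ} {r : ℤ} (ht₂ : 0 ≤ t₂) (ht : t₂ ≤ t₁)
    (hα : α ≤ Real.pi / 2) (h₀ : InSector β α (a r)) (h₁ : InSector β α (a (r - 1)))
    (h₂ : InSector β α (a (r - 2))) :
    ‖quadMulCoeff (t₁ : ℂ) t₂ a r‖ ≤
      |quadMulCoeff t₁ t₂ (‖a ·‖) r| * Real.cos α
        + (quadMulCoeff t₁ t₂ (‖a ·‖) r + 2 * ‖a (r - 2)‖) * Real.sin α := by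
  have h := norm_sum_mul_sub_le univ (c := ![t₁ * t₂, t₁ - t₂]) (w := ![a r, a (r - 1)])
    (fun i _ => by fin_cases i <;> simp <;> nlinarith) (fun i _ => by fin_cases i <;> simpa) h₂ hα
  simp only [Fin.sum_univ_two, Matrix.cons_val_zero, Matrix.cons_val_one] at h
  calc ‖quadMulCoeff (t₁ : ℂ) t₂ a r‖
      = ‖((t₁ * t₂ : ℝ) : ℂ) * a r + ((t₁ - t₂ : ℝ) : ℂ) * a (r - 1) - a (r - 2)‖ := by
        push_cast; rfl
    _ ≤ _ := h
    _ = _ := by simp only [quadMulCoeff]; ring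

lemma mul_mul_pow_le_sum_mul_pow {N : ℕ} {c : ℕ → ℝ} {A t x : ℝ} (hc : ∀ r, 0 ≤ c r)
    (ht : 0 ≤ t) (htx : t ≤ x) (hx : 0 < x)
    (h : A * x ^ (N + 1) ≤ ∑ r ∈ range (N + 1), c r * x ^ r) :
    A * x * t ^ N ≤ ∑ r ∈ range (N + 1), c r * t ^ r := by
  have hswap : (∑ r ∈ range (N + 1), c r * x ^ r) * t ^ N ≤
      (∑ r ∈ range (N + 1), c r * t ^ r) * x ^ N := by
    rw [sum_mul, sum_mul]
    refine sum_le_sum fun r hr => ?_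
    obtain ⟨d, rfl⟩ := Nat.exists_eq_add_of_le (Nat.lt_succ_iff.mp (mem_range.1 hr))
    have := hc r
    calc c r * x ^ r * t ^ (r + d) = c r * t ^ r * (x ^ r * t ^ d) := by ring
      _ ≤ c r * t ^ r * (x ^ r * x ^ d) := by gcongr
      _ = c r * t ^ r * x ^ (r + d) := by ring
  refine le_of_mul_le_mul_right ?_ (pow_pos hx N)
  calc A * x * t ^ N * x ^ N = A * x ^ (N + 1) * t ^ N := by ring
    _ ≤ (∑ r ∈ range (N + 1), c r * x ^ r) * t ^ N := by gcongr
    _ ≤ _ := hswap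

lemma norm_mul_mul_pow_le_sum_norm_quadMulCoeff {n : ℕ} {a : ℤ → ℂ} {t₁ t₂ : ℝ} {z : ℂ}
    (h₁ : a (-1) = 0) (h₂ : a (-2) = 0) (hn : a (n + 1) = 0)
    (hz : ∑ j ∈ range (n + 1), a j * z ^ j = 0) (ht₁ : 0 ≤ t₁) (hzt : t₁ < ‖z‖) :
    ‖a n‖ * ‖z‖ * t₁ ^ (n + 1) ≤
      ∑ r ∈ range (n + 2), ‖quadMulCoeff (t₁ : ℂ) t₂ a r‖ * t₁ ^ r := by
  refine mul_mul_pow_le_sum_mul_pow (fun r => norm_nonneg _) ht₁ hzt.le (ht₁.trans_lt hzt) ?_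
  have hid := sum_range_quadMulCoeff_mul_pow (t₁ : ℂ) t₂ z h₁ h₂ hn
  rw [hz, mul_zero, zero_add] at hid
  calc ‖a n‖ * ‖z‖ ^ (n + 1 + 1)
      = ‖∑ r ∈ range (n + 2), quadMulCoeff (t₁ : ℂ) t₂ a r * z ^ r‖ := by
        rw [hid, norm_mul, norm_pow]
    _ ≤ _ := (norm_sum_le _ _).trans_eq (sum_congr rfl fun r _ => by rw [norm_mul, norm_pow])

lemma sum_norm_quadMulCoeff_mul_pow_le {β α t₁ t₂ : ℝ} {a : ℤ → ℂ} {n : ℕ} (ht₂ : 0 ≤ t₂)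
    (ht : t₂ ≤ t₁) (hα : α ≤ Real.pi / 2)
    (ha : ∀ j : ℤ, -2 ≤ j → j ≤ n + 1 → InSector β α (a j)) :
    ∑ r ∈ range (n + 2), ‖quadMulCoeff (t₁ : ℂ) t₂ a r‖ * t₁ ^ r ≤
      Real.cos α * ∑ r ∈ range (n + 2), |quadMulCoeff t₁ t₂ (‖a ·‖) r| * t₁ ^ r +
        Real.sin α * ∑ r ∈ range (n + 2),
          (quadMulCoeff t₁ t₂ (‖a ·‖) r + 2 * ‖a (r - 2)‖) * t₁ ^ r := by
  rw [mul_sum, mul_sum, ← sum_add_distrib]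
  refine sum_le_sum fun r hr => ?_
  have hr : r < n + 2 := mem_range.1 hr
  have ht₁ : 0 ≤ t₁ := ht₂.trans ht
  calc ‖quadMulCoeff (t₁ : ℂ) t₂ a r‖ * t₁ ^ r
      ≤ (|quadMulCoeff t₁ t₂ (‖a ·‖) r| * Real.cos α
          + (quadMulCoeff t₁ t₂ (‖a ·‖) r + 2 * ‖a (r - 2)‖) * Real.sin α) * t₁ ^ r := by
        gcongr
        exact norm_quadMulCoeff_le ht₂ ht hα (ha _ (by omega) (by omega))
          (ha _ (by omega) (by omega)) (ha _ (by omega) (by omega))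
    _ = _ := by ring

lemma bound_mul_eq {n k : ℕ} (hk : k ≤ n) {t t₂ c s : ℝ} {b : ℤ → ℝ} (ht : t ≠ 0)
    (hb : b n ≠ 0) :
    (t * (((2 * b k + 2 * t₂ * b (k + 1)) / (t ^ (n - k) * b n) - 1) * c + s)
      + 2 * s / b n * ∑ j ∈ range n, b j / t ^ (n - j - 1)) * (b n * t ^ (n + 1)) =
      c * (2 * (t ^ (k + 2) * (t₂ * b (k + 1) + b k)) - t ^ (n + 2) * b n)
        + s * (t ^ (n + 2) * b n + 2 * t ^ 2 * ∑ j ∈ range n, b j * t ^ j) := by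
  have hsum : (∑ j ∈ range n, b j / t ^ (n - j - 1)) * t ^ (n + 1) =
      t ^ 2 * ∑ j ∈ range n, b j * t ^ j := by
    rw [sum_mul, mul_sum]
    refine sum_congr rfl fun j hj => ?_
    rw [show n + 1 = n - j - 1 + (2 + j) by have := mem_range.1 hj; omega, pow_add, pow_add]
    field_simp
  have hsum' : 2 * s / b n * (∑ j ∈ range n, b j / t ^ (n - j - 1)) * (b n * t ^ (n + 1)) =
      2 * s * t ^ 2 * ∑ j ∈ range n, b j * t ^ j := by
    rw [mul_assoc (2 * s), ← hsum]
    field_simp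
  have hpow : ∀ m, t ^ (n + m) = t ^ (n - k) * t ^ (k + m) := fun m => by
    rw [← pow_add]; congr 1; omega
  rw [add_mul, hsum', hpow 1, hpow 2]
  field_simp
  ring

lemma le_cos_mul_add_sin_mul {α x u v : ℝ} (hα₀ : 0 ≤ α) (hα : α ≤ Real.pi / 2) (hx : 0 ≤ x)
    (hu : x ≤ u) (hv : x ≤ v) : x ≤ Real.cos α * u + Real.sin α * v := by
  have hc : 0 ≤ Real.cos α := Real.cos_nonneg_of_mem_Icc ⟨by linarith [Real.pi_pos], hα⟩
  have hs : 0 ≤ Real.sin α := Real.sin_nonneg_of_nonneg_of_le_pi hα₀ (by linarith [Real.pi_pos])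
  have hcs : 1 ≤ Real.cos α + Real.sin α := by nlinarith [Real.sin_sq_add_cos_sq α]
  nlinarith [mul_le_mul_of_nonneg_left hu hc, mul_le_mul_of_nonneg_left hv hs]

/-- Theorem 1.5 (Rather–Gulzar–Mattoo). -/
theorem thm15 (n k : ℕ) (a : ℤ → ℂ) (han : a n ≠ 0) (hk : k ≤ n)
    (α β : ℝ) (hα : α ≤ Real.pi / 2)
    (harg : ∀ j : ℤ, 0 ≤ j → j ≤ n → |Complex.arg (a j) - β| ≤ α)
    (hm2 : a (-2) = 0) (hm1 : a (-1) = 0) (htop : a (n + 1) = 0)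
    (t1 t2 : ℝ) (ht : t1 > t2) (ht2 : 0 ≤ t2)
    (hc1 : ∀ r : ℤ, 1 ≤ r → r ≤ k + 1 →
      0 ≤ t1 * t2 * ‖a r‖ + (t1 - t2) * ‖a (r - 1)‖ -
        ‖a (r - 2)‖)
    (hc2 : ∀ r : ℤ, k + 2 ≤ r → r ≤ n + 1 →
      t1 * t2 * ‖a r‖ + (t1 - t2) * ‖a (r - 1)‖ -
        ‖a (r - 2)‖ ≤ 0)
    (z : ℂ) (hz : ∑ j ∈ Finset.range (n + 1), a j * z ^ j = 0) :
    ‖z‖ ≤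
      t1 * (((2 * ‖a k‖ + 2 * t2 * ‖a (k + 1)‖) /
          (t1 ^ (n - k) * ‖a n‖) - 1) * Real.cos α + Real.sin α)
      + (2 * Real.sin α / ‖a n‖) *
          ∑ j ∈ Finset.range n, ‖a j‖ / t1 ^ (n - j - 1) := by
  have ht₁ : 0 < t1 := ht2.trans_lt ht
  have hα₀ : 0 ≤ α := (abs_nonneg _).trans (harg 0 le_rfl (by positivity))
  have hsector : ∀ j : ℤ, -2 ≤ j → j ≤ n + 1 → InSector β α (a j) := fun j hj₁ hj₂ => by
    by_cases hj : 0 ≤ j ∧ j ≤ n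
    · exact inSector_of_abs_arg_sub_le (harg j hj.1 hj.2)
    · obtain rfl | rfl | rfl : j = -2 ∨ j = -1 ∨ j = n + 1 := by omega
      all_goals simpa [hm2, hm1, htop] using inSector_zero (β := β) hα₀
  have hb₁ : ‖a (-1)‖ = 0 := by simp [hm1]
  have hb₂ : ‖a (-2)‖ = 0 := by simp [hm2]
  have hbn : ‖a (n + 1)‖ = 0 := by simp [htop]
  have hpos : ∀ r : ℕ, r < k + 2 → 0 ≤ quadMulCoeff t1 t2 (‖a ·‖) r := by
    rintro (_ | r) hr
    · simpa [quadMulCoeff, hb₁, hb₂] using mul_nonneg (mul_nonneg ht₁.le ht2) (norm_nonneg (a 0))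
    · exact_mod_cast hc1 (r + 1) (by omega) (by omega)
  have hneg : ∀ r : ℕ, k + 2 ≤ r → r < n + 2 → quadMulCoeff t1 t2 (‖a ·‖) r ≤ 0 :=
    fun r h₁ h₂ => hc2 r (by omega) (by omega)
  have hM := sum_norm_quadMulCoeff_mul_pow_le ht2 ht.le hα hsector
  rw [sum_range_abs_quadMulCoeff_mul_pow hk ht₁.le hb₁ hb₂ hbn hpos hneg,
    sum_range_quadMulCoeff_add_mul_pow (b := (‖a ·‖)) t1 t2 hb₁ hb₂ hbn] at hM
  refine le_of_mul_le_mul_right ?_ (by positivity : 0 < ‖a n‖ * t1 ^ (n + 1))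
  rw [bound_mul_eq (b := (‖a ·‖)) hk ht₁.ne' (norm_ne_zero_iff.mpr han)]
  rcases le_or_gt ‖z‖ t1 with hz₁ | hz₁
  · calc ‖z‖ * (‖a n‖ * t1 ^ (n + 1)) ≤ t1 * (‖a n‖ * t1 ^ (n + 1)) := by gcongr
      _ = t1 ^ (n + 2) * ‖a n‖ := by ring
      _ ≤ _ := le_cos_mul_add_sin_mul hα₀ hα (by positivity)
          (by linarith [pow_mul_le_of_quadMulCoeff_nonpos hk ht₁.le hb₁ hb₂ hbn hneg])
          (le_add_of_nonneg_right (by positivity))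
  · calc ‖z‖ * (‖a n‖ * t1 ^ (n + 1)) = ‖a n‖ * ‖z‖ * t1 ^ (n + 1) := by ring
      _ ≤ _ := norm_mul_mul_pow_le_sum_norm_quadMulCoeff hm1 hm2 htop hz ht₁.le hz₁
      _ ≤ _ := hM
end

section
/- Let a_{n-1}, a_n be complex numbers with a_n ≠ 0, both satisfying |arg w − β| ≤ α ≤ π/2 for some real β, and let t_1 > t_2 ≥ 0. Then |a_{n-1}/a_n − (t_1 − t_2)| ≤ ( |a_{n-1}/a_n| − (t_1 − t_2) ) cos α + ( t_1 − t_2 + |a_{n-1}/a_n| ) sin α, provided the hypothesis (t_1 − t_2)|a_n| ≤ |a_{n-1}| holds. -/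
/-!
Put `q = a_{n-1} / a_n` and `t = t₁ - t₂`, so `0 < t ≤ |q|`. Both coefficients lie in a sector
of opening `2α ≤ π`, hence `|arg q| ≤ 2α` modulo `2π` and `cos (arg q) ≥ cos 2α`. By the law of
cosines, `|q - t|² ≤ |q|² + t² - 2 t |q| cos 2α = ((|q| - t) cos α)² + ((|q| + t) sin α)²`, and
both terms are nonnegative, so this is at most `((|q| - t) cos α + (|q| + t) sin α)²`.
-/

open Real

lemma Complex.norm_sub_ofReal_sq (z : ℂ) (t : ℝ) :
    ‖z - t‖ ^ 2 = ‖z‖ ^ 2 + t ^ 2 - 2 * t * ‖z‖ * Real.cos z.arg := by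
  rw [mul_assoc, Complex.norm_mul_cos_arg, Complex.sq_norm, Complex.sq_norm, Complex.normSq_sub]
  simp only [Complex.normSq_ofReal, Complex.conj_ofReal, Complex.re_mul_ofReal]
  ring

lemma sq_add_sq_sub_two_mul_mul_cos_le {r t α c : ℝ} (ht : 0 ≤ t) (htr : t ≤ r)
    (hα0 : 0 ≤ α) (hα : α ≤ π / 2) (hc : Real.cos (2 * α) ≤ c) :
    r ^ 2 + t ^ 2 - 2 * t * r * c ≤ ((r - t) * Real.cos α + (t + r) * Real.sin α) ^ 2 := by
  have hsin : 0 ≤ Real.sin α := sin_nonneg_of_nonneg_of_le_pi hα0 (by linarith [pi_pos])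
  have hcos : 0 ≤ Real.cos α := cos_nonneg_of_mem_Icc ⟨by linarith [pi_pos], hα⟩
  have hcross : 0 ≤ (r - t) * Real.cos α * ((t + r) * Real.sin α) :=
    mul_nonneg (mul_nonneg (by linarith) hcos) (mul_nonneg (by linarith) hsin)
  calc r ^ 2 + t ^ 2 - 2 * t * r * c ≤ r ^ 2 + t ^ 2 - 2 * t * r * Real.cos (2 * α) := by
        nlinarith [mul_nonneg ht (ht.trans htr)]
    _ = ((r - t) * Real.cos α) ^ 2 + ((t + r) * Real.sin α) ^ 2 := by
        rw [cos_two_mul]; linear_combination -(t + r) ^ 2 * sin_sq_add_cos_sq α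
    _ ≤ ((r - t) * Real.cos α + (t + r) * Real.sin α) ^ 2 := by nlinarith

lemma Complex.norm_sub_ofReal_le_of_cos_two_mul_le_cos_arg {z : ℂ} {t α : ℝ} (ht : 0 ≤ t)
    (htz : t ≤ ‖z‖) (hα0 : 0 ≤ α) (hα : α ≤ π / 2) (hz : Real.cos (2 * α) ≤ Real.cos z.arg) :
    ‖z - t‖ ≤ (‖z‖ - t) * Real.cos α + (t + ‖z‖) * Real.sin α := by
  have hsin : 0 ≤ Real.sin α := sin_nonneg_of_nonneg_of_le_pi hα0 (by linarith [pi_pos])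
  have hcos : 0 ≤ Real.cos α := cos_nonneg_of_mem_Icc ⟨by linarith [pi_pos], hα⟩
  refine le_of_sq_le_sq ?_ (by nlinarith)
  rw [Complex.norm_sub_ofReal_sq]
  exact sq_add_sq_sub_two_mul_mul_cos_le ht htz hα0 hα hz

lemma Complex.cos_two_mul_le_cos_arg_div {z w : ℂ} {α β : ℝ}
    (hα : α ≤ π / 2) (hzβ : |z.arg - β| ≤ α) (hwβ : |w.arg - β| ≤ α) :
    Real.cos (2 * α) ≤ Real.cos (z / w).arg := by
  rcases eq_or_ne z 0 with rfl | hz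
  · simpa using cos_le_one _
  rcases eq_or_ne w 0 with rfl | hw
  · simpa using cos_le_one _
  have hcos : Real.cos (z / w).arg = Real.cos (z.arg - w.arg) := by
    rw [← Real.Angle.cos_coe, ← Real.Angle.cos_coe, Complex.arg_div_coe_angle hz hw,
      Real.Angle.coe_sub]
  have hdiff : |z.arg - w.arg| ≤ 2 * α := by
    calc |z.arg - w.arg| = |(z.arg - β) - (w.arg - β)| := by ring_nf
      _ ≤ |z.arg - β| + |w.arg - β| := abs_sub _ _
      _ ≤ 2 * α := by linarith
  rw [hcos, ← Real.cos_abs (z.arg - w.arg)]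
  exact cos_le_cos_of_nonneg_of_le_pi (abs_nonneg _) (by linarith) hdiff

theorem lemma21_top_general (an1 an : ℂ) (han : an ≠ 0)
    (α β : ℝ) (hα : α ≤ Real.pi / 2)
    (ha : |Complex.arg an1 - β| ≤ α) (hb : |Complex.arg an - β| ≤ α)
    (t1 t2 : ℝ) (ht : t1 > t2)
    (hcond : (t1 - t2) * ‖an‖ ≤ ‖an1‖) :
    ‖an1 / an - ((t1 - t2 : ℝ) : ℂ)‖ ≤
      (‖an1 / an‖ - (t1 - t2)) * Real.cos α
      + (t1 - t2 + ‖an1 / an‖) * Real.sin α := by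
  have hle : t1 - t2 ≤ ‖an1 / an‖ := by
    rwa [norm_div, le_div_iff₀ (norm_pos_iff.2 han)]
  exact Complex.norm_sub_ofReal_le_of_cos_two_mul_le_cos_arg (sub_pos.2 ht).le hle
    ((abs_nonneg _).trans ha) hα (Complex.cos_two_mul_le_cos_arg_div hα ha hb)

/-- Estimate from Lemma 2.1 with j = n+1, used in Remark 1.8 and Theorem 1.7. -/
theorem lemma21_top (an1 an : ℂ) (han : an ≠ 0)
    (α β : ℝ) (hα0 : 0 ≤ α) (hα : α ≤ Real.pi / 2)
    (ha : |Complex.arg an1 - β| ≤ α) (hb : |Complex.arg an - β| ≤ α)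
    (t1 t2 : ℝ) (ht : t1 > t2) (ht2 : 0 ≤ t2)
    (hcond : (t1 - t2) * ‖an‖ ≤ ‖an1‖) :
    ‖an1 / an - ((t1 - t2 : ℝ) : ℂ)‖ ≤
      (‖an1 / an‖ - (t1 - t2)) * Real.cos α
      + (t1 - t2 + ‖an1 / an‖) * Real.sin α :=
  lemma21_top_general an1 an han α β hα ha hb t1 t2 ht hcond
end
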